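/- arXiv:1811.03895 — 7 statements merged into one kernel-verified Lean document; each statement's English description precedes it below -/
import Mathlib

section
/- Let ψ be an MDP homomorphism (P_ψ(s'r|ha) = p(s'r|sb) whenever ψ(h,a)=(s,b)) and let π* be an optimal policy of the abstract MDP p. Define the uplifted policy Π̆ by Π̆(h) ∈ ψ_s^{-1}(π*(s)) for ψ(h)=s, i.e. Π̆(h) is any original action mapping to the abstract optimal action. Then V^{Π̆}(h) = V*(h) for all histories h, i.e. the uplifted policy is optimal in the original process. -/
/-!
The homomorphism condition says that the abstract kernel `p` is the image of `P` under `f`, so the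
Bellman backup of a function `u ∘ f` in the original process is the abstract backup of `u`, lifted
along `ψ`. Since `Π̆` picks a preimage of the abstract optimal action, the backups defining `V*` and
`V^Π̆` both move any function within `c` of `v ∘ f` to within `γ c` of `v ∘ f`. All three value
functions are bounded by `1 / (1 - γ)`, so both distances vanish and `V^Π̆ = v ∘ f = V*`.
-/

open Finset Filter Topology

theorem eq_zero_of_bounded_of_contracts {X : Type*} {γ C : ℝ} (hγ0 : 0 ≤ γ) (hγ1 : γ < 1)
    (e : X → ℝ) (hC : ∀ x, |e x| ≤ C)
    (hstep : ∀ c, (∀ x, |e x| ≤ c) → ∀ x, |e x| ≤ γ * c) (x : X) : e x = 0 := by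
  have hpow : ∀ n : ℕ, ∀ x, |e x| ≤ γ ^ n * C := by
    intro n
    induction n with
    | zero => simpa using hC
    | succ n ih => simpa only [pow_succ', mul_assoc] using hstep _ ih
  have hlim : Tendsto (fun n : ℕ => γ ^ n * C) atTop (𝓝 0) := by
    simpa using (tendsto_pow_atTop_nhds_zero_of_lt_one hγ0 hγ1).mul_const C
  exact abs_nonpos_iff.mp (ge_of_tendsto' hlim fun n => hpow n x)

theorem abs_sum_sum_mul_le_of_stochastic {O R : Type*} [Fintype O] [Fintype R]
    {w F : O → R → ℝ} {C : ℝ} (hw0 : ∀ o r, 0 ≤ w o r) (hw1 : ∑ o, ∑ r, w o r = 1)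
    (hF : ∀ o r, |F o r| ≤ C) :
    |∑ o, ∑ r, w o r * F o r| ≤ C := by
  calc |∑ o, ∑ r, w o r * F o r|
      ≤ ∑ o, ∑ r, |w o r * F o r| :=
        (abs_sum_le_sum_abs _ _).trans (sum_le_sum fun o _ => abs_sum_le_sum_abs _ _)
    _ ≤ ∑ o, ∑ r, w o r * C := by
        gcongr with o _ r _
        rw [abs_mul, abs_of_nonneg (hw0 o r)]
        exact mul_le_mul_of_nonneg_left (hF o r) (hw0 o r)
    _ = C := by simp only [← sum_mul, hw1, one_mul]

theorem abs_sup'_sub_le {ι : Type*} {s : Finset ι} (hs : s.Nonempty) {F : ι → ℝ} {x ε : ℝ}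
    (hle : ∀ i ∈ s, F i ≤ x + ε) {i : ι} (hi : i ∈ s) (hge : x ≤ F i + ε) :
    |s.sup' hs F - x| ≤ ε := by
  have hupper : s.sup' hs F ≤ x + ε := sup'_le hs F hle
  have hlower : F i ≤ s.sup' hs F := le_sup' F hi
  exact abs_sub_le_iff.mpr ⟨by linarith, by linarith⟩

section Homomorphism

variable {H A O R S B : Type*} [Fintype O] [Fintype R] [Fintype S] [DecidableEq S]
  {P : H → A → O → R → ℝ} {ext : H → A → O → R → H} {f : H → S} {g : H → A → B}
  {p : S → B → S → R → ℝ}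

theorem sum_abstract_eq_sum_lift
    (hMDP : ∀ h a s' r,
      (∑ o ∈ univ.filter fun o => f (ext h a o r) = s', P h a o r) = p (f h) (g h a) s' r)
    (F : R → S → ℝ) (h : H) (a : A) :
    ∑ s', ∑ r, p (f h) (g h a) s' r * F r s' = ∑ o, ∑ r, P h a o r * F r (f (ext h a o r)) := by
  rw [sum_comm, sum_comm (s := univ (α := O))]
  refine sum_congr rfl fun r _ => ?_
  calc ∑ s', p (f h) (g h a) s' r * F r s'
      = ∑ s', ∑ o ∈ univ.filter fun o => f (ext h a o r) = s',
          P h a o r * F r (f (ext h a o r)) := by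
        refine sum_congr rfl fun s' _ => ?_
        rw [← hMDP, sum_mul]
        exact sum_congr rfl fun o ho => by rw [(mem_filter.mp ho).2]
    _ = ∑ o, P h a o r * F r (f (ext h a o r)) := sum_fiberwise _ _ _

theorem abs_backup_sub_abstract_backup_le
    (hP0 : ∀ h a o r, 0 ≤ P h a o r) (hP1 : ∀ h a, ∑ o, ∑ r, P h a o r = 1)
    (hMDP : ∀ h a s' r,
      (∑ o ∈ univ.filter fun o => f (ext h a o r) = s', P h a o r) = p (f h) (g h a) s' r)
    {γ c : ℝ} (hγ0 : 0 ≤ γ) (ρ : R → ℝ) {W : H → ℝ} {u : S → ℝ}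
    (hWu : ∀ h, |W h - u (f h)| ≤ c) (h : H) (a : A) :
    |∑ o, ∑ r, P h a o r * (ρ r + γ * W (ext h a o r))
      - ∑ s', ∑ r, p (f h) (g h a) s' r * (ρ r + γ * u s')| ≤ γ * c := by
  rw [sum_abstract_eq_sum_lift hMDP (fun r s' => ρ r + γ * u s')]
  simp only [← sum_sub_distrib, ← mul_sub, add_sub_add_left_eq_sub]
  refine abs_sum_sum_mul_le_of_stochastic (hP0 h a) (hP1 h a) fun o r => ?_
  rw [abs_mul, abs_of_nonneg hγ0]
  exact mul_le_mul_of_nonneg_left (hWu _) hγ0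

end Homomorphism
theorem stmt_2_general
    {H A O R S Bt : Type*} [Fintype A] [Nonempty A] [Fintype O] [Fintype R]
    [Fintype S] [Fintype Bt] [Nonempty Bt] [DecidableEq S]
    (γ : ℝ) (hγ0 : 0 ≤ γ) (hγ1 : γ < 1)
    (ρ : R → ℝ)
    (P : H → A → O → R → ℝ)
    (hP0 : ∀ h a o r, 0 ≤ P h a o r)
    (hP1 : ∀ h a, ∑ o : O, ∑ r : R, P h a o r = 1)
    (ext : H → A → O → R → H)
    -- the homomorphism ψ(h,a) = (f h, g h a), surjective
    (f : H → S) (g : H → A → Bt)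
    -- MDP condition: P_ψ(s' r | h a) = p(s' r | f h, g h a)
    (p : S → Bt → S → R → ℝ)
    (hMDP : ∀ h a s' r,
      (∑ o ∈ Finset.univ.filter fun o => f (ext h a o r) = s', P h a o r)
        = p (f h) (g h a) s' r)
    -- optimal (action-)value functions of the original process
    (Qstar : H → A → ℝ) (Vstar : H → ℝ)
    (hQstar : ∀ h a, Qstar h a =
      ∑ o : O, ∑ r : R, P h a o r * (ρ r + γ * Vstar (ext h a o r)))
    (hVstar : ∀ h, Vstar h = Finset.univ.sup' Finset.univ_nonempty (Qstar h))
    (hVstarBnd : ∀ h, 0 ≤ Vstar h ∧ Vstar h ≤ 1 / (1 - γ))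
    -- optimal (action-)value functions of the abstract MDP p
    (q : S → Bt → ℝ) (v : S → ℝ)
    (hq : ∀ s b, q s b = ∑ s' : S, ∑ r : R, p s b s' r * (ρ r + γ * v s'))
    (hv : ∀ s, v s = Finset.univ.sup' Finset.univ_nonempty (q s))
    (hvBnd : ∀ s, 0 ≤ v s ∧ v s ≤ 1 / (1 - γ))
    -- an optimal policy π* of the abstract MDP
    (πs : S → Bt) (hπs : ∀ s, q s (πs s) = v s)
    -- the uplifted policy Π̆ and its (action-)value functions
    (Pol : H → A) (hlift : ∀ h, g h (Pol h) = πs (f h))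
    (QPol : H → A → ℝ) (VPol : H → ℝ)
    (hQPol : ∀ h a, QPol h a =
      ∑ o : O, ∑ r : R, P h a o r * (ρ r + γ * VPol (ext h a o r)))
    (hVPol : ∀ h, VPol h = QPol h (Pol h))
    (hVPolBnd : ∀ h, 0 ≤ VPol h ∧ VPol h ≤ 1 / (1 - γ)) :
    ∀ h, VPol h = Vstar h := by
  have hVf : ∀ h, v (f h) = q (f h) (g h (Pol h)) := fun h => by rw [hlift, hπs]
  have hbnd : ∀ {W : H → ℝ}, (∀ h, 0 ≤ W h ∧ W h ≤ 1 / (1 - γ)) →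
      ∀ h, |W h - v (f h)| ≤ 1 / (1 - γ) := fun hW h =>
    abs_sub_le_of_nonneg_of_le (hW h).1 (hW h).2 (hvBnd _).1 (hvBnd _).2
  have hbackup : ∀ {W : H → ℝ} {c : ℝ}, (∀ h, |W h - v (f h)| ≤ c) → ∀ h a,
      |∑ o, ∑ r, P h a o r * (ρ r + γ * W (ext h a o r)) - q (f h) (g h a)| ≤ γ * c :=
    fun hW h a => by
      rw [hq]; exact abs_backup_sub_abstract_backup_le hP0 hP1 hMDP hγ0 ρ hW h a
  have hPol : ∀ h, VPol h - v (f h) = 0 :=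
    eq_zero_of_bounded_of_contracts hγ0 hγ1 _ (hbnd hVPolBnd) fun c hc h => by
      rw [hVPol, hQPol, hVf]; exact hbackup hc h (Pol h)
  have hStar : ∀ h, Vstar h - v (f h) = 0 :=
    eq_zero_of_bounded_of_contracts hγ0 hγ1 _ (hbnd hVstarBnd) fun c hc h => by
      have hQ : ∀ a, |Qstar h a - q (f h) (g h a)| ≤ γ * c := fun a => by
        rw [hQstar]; exact hbackup hc h a
      rw [hVstar]
      refine abs_sup'_sub_le _ (fun a _ => ?_) (mem_univ (Pol h)) ?_
      · have hqv : q (f h) (g h a) ≤ v (f h) := hv (f h) ▸ le_sup' (q (f h)) (mem_univ (g h a))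
        linarith [(abs_le.mp (hQ a)).2]
      · linarith [(abs_le.mp (hQ (Pol h))).1, hVf h]
  intro h
  linarith [hPol h, hStar h]

/-- Let `ψ(h,a)=(f h, g h a)` be an MDP homomorphism and `π*` an
optimal policy of the abstract MDP `p`. If the uplifted policy `Π̆` satisfies
`Π̆(h) ∈ ψ_s^{-1}(π*(s))` for `f h = s` (i.e. `g h (Π̆ h) = π*(f h)`), then
`V^{Π̆}(h) = V*(h)` for all histories `h`: the uplifted policy is optimal in
the original process. -/
theorem stmt_2
    {H A O R S Bt : Type*} [Fintype A] [Nonempty A] [Fintype O] [Fintype R]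
    [Fintype S] [Fintype Bt] [Nonempty Bt] [DecidableEq S]
    (γ : ℝ) (hγ0 : 0 ≤ γ) (hγ1 : γ < 1)
    (ρ : R → ℝ) (hρ : ∀ r, ρ r ∈ Set.Icc (0 : ℝ) 1)
    (P : H → A → O → R → ℝ)
    (hP0 : ∀ h a o r, 0 ≤ P h a o r)
    (hP1 : ∀ h a, ∑ o : O, ∑ r : R, P h a o r = 1)
    (ext : H → A → O → R → H)
    -- the homomorphism ψ(h,a) = (f h, g h a), surjective
    (f : H → S) (g : H → A → Bt)
    (hsurj : ∀ s b, ∃ h a, f h = s ∧ g h a = b)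
    -- MDP condition: P_ψ(s' r | h a) = p(s' r | f h, g h a)
    (p : S → Bt → S → R → ℝ)
    (hMDP : ∀ h a s' r,
      (∑ o ∈ Finset.univ.filter fun o => f (ext h a o r) = s', P h a o r)
        = p (f h) (g h a) s' r)
    -- optimal (action-)value functions of the original process
    (Qstar : H → A → ℝ) (Vstar : H → ℝ)
    (hQstar : ∀ h a, Qstar h a =
      ∑ o : O, ∑ r : R, P h a o r * (ρ r + γ * Vstar (ext h a o r)))
    (hVstar : ∀ h, Vstar h = Finset.univ.sup' Finset.univ_nonempty (Qstar h))
    (hVstarBnd : ∀ h, 0 ≤ Vstar h ∧ Vstar h ≤ 1 / (1 - γ))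
    -- optimal (action-)value functions of the abstract MDP p
    (q : S → Bt → ℝ) (v : S → ℝ)
    (hq : ∀ s b, q s b = ∑ s' : S, ∑ r : R, p s b s' r * (ρ r + γ * v s'))
    (hv : ∀ s, v s = Finset.univ.sup' Finset.univ_nonempty (q s))
    (hvBnd : ∀ s, 0 ≤ v s ∧ v s ≤ 1 / (1 - γ))
    -- an optimal policy π* of the abstract MDP
    (πs : S → Bt) (hπs : ∀ s, q s (πs s) = v s)
    -- the uplifted policy Π̆ and its (action-)value functions
    (Pol : H → A) (hlift : ∀ h, g h (Pol h) = πs (f h))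
    (QPol : H → A → ℝ) (VPol : H → ℝ)
    (hQPol : ∀ h a, QPol h a =
      ∑ o : O, ∑ r : R, P h a o r * (ρ r + γ * VPol (ext h a o r)))
    (hVPol : ∀ h, VPol h = QPol h (Pol h))
    (hVPolBnd : ∀ h, 0 ≤ VPol h ∧ VPol h ≤ 1 / (1 - γ)) :
    ∀ h, VPol h = Vstar h :=
  stmt_2_general γ hγ0 hγ1 ρ P hP0 hP1 ext f g p hMDP Qstar Vstar hQstar hVstar hVstarBnd q v hq hv
    hvBnd πs hπs Pol hlift QPol VPol hQPol hVPol hVPolBnd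
end

section
/- Suppose |Q*(h,a) − Q*(h',a')| ≤ ε for all ψ(h,a)=ψ(h',a'). Let π* be an optimal policy of the surrogate MDP p_B (for any stochastic inverse B), and define the uplifted policy Π̆(h) ∈ ψ_s^{-1}(π*(s)) for ψ(h)=s. Then 0 ≤ V*(h) − V^{Π̆}(h) ≤ 4ε/(1−γ)² for all histories h. -/
open Finset

/-!
Pull the surrogate value back along `f`. Every history–action pair in the support of
`B (f h) (g h a)` has optimal action value within `ε` of `Q*(h, a)`, and the surrogate
action value is the `B`-average of one Bellman backup of `v ∘ f`; hence
`|q(f h, g h a) - Q*(h, a)| ≤ ε + γ ‖V* - v ∘ f‖∞`. Since `V*` and `v ∘ f` are the maxima of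
these two action values, `‖V* - v ∘ f‖∞ ≤ ε + γ ‖V* - v ∘ f‖∞`, i.e. `‖V* - v ∘ f‖∞ ≤ ε/(1-γ)`.
Consequently the uplifted policy is `2ε/(1-γ)`-greedy for `Q*`, and a `δ`-greedy policy loses
at most `δ/(1-γ)` against `V*`.
-/

theorem le_div_one_sub_of_forall_le_add_mul {ι : Type*} {D : ι → ℝ} {γ c : ℝ} (hγ1 : γ < 1)
    (hD : BddAbove (Set.range D)) (hc : ∀ M, (∀ j, D j ≤ M) → ∀ i, D i ≤ c + γ * M) (i : ι) :
    D i ≤ c / (1 - γ) := by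
  have : Nonempty ι := ⟨i⟩
  have hsup : ⨆ j, D j ≤ c + γ * ⨆ j, D j := ciSup_le (hc _ fun j => le_ciSup hD j)
  rw [le_div_iff₀ (by linarith)]
  nlinarith [le_ciSup hD i]

theorem sum_sum_mul_le_of_le {O R : Type*} [Fintype O] [Fintype R] {p φ : O → R → ℝ} {C : ℝ}
    (hp0 : ∀ o r, 0 ≤ p o r) (hp1 : ∑ o, ∑ r, p o r = 1) (hφ : ∀ o r, φ o r ≤ C) :
    ∑ o, ∑ r, p o r * φ o r ≤ C :=
  calc ∑ o, ∑ r, p o r * φ o r ≤ ∑ o, ∑ r, p o r * C :=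
        sum_le_sum fun o _ => sum_le_sum fun r _ => mul_le_mul_of_nonneg_left (hφ o r) (hp0 o r)
    _ = C := by simp only [← sum_mul, hp1, one_mul]

theorem abs_sub_le_of_hasSum_mul {ι : Type*} {w F : ι → ℝ} {c δ y : ℝ} (hw0 : ∀ i, 0 ≤ w i)
    (hw1 : HasSum w 1) (hy : HasSum (fun i => w i * F i) y)
    (hF : ∀ i, w i ≠ 0 → |F i - c| ≤ δ) : |y - c| ≤ δ := by
  have hF' : ∀ i, w i * (c - δ) ≤ w i * F i ∧ w i * F i ≤ w i * (c + δ) := fun i => by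
    by_cases hi : w i = 0
    · simp [hi]
    · have := abs_sub_le_iff.1 (hF i hi)
      exact ⟨mul_le_mul_of_nonneg_left (by linarith) (hw0 i),
        mul_le_mul_of_nonneg_left (by linarith) (hw0 i)⟩
  have hlow := hasSum_le (fun i => (hF' i).1) (by simpa using hw1.mul_right (c - δ)) hy
  have hup := hasSum_le (fun i => (hF' i).2) hy (by simpa using hw1.mul_right (c + δ))
  exact abs_sub_le_iff.2 ⟨by linarith, by linarith⟩

section Bellman

variable {H A O R : Type*} [Fintype O] [Fintype R]

noncomputable def bellmanQ (P : H → A → O → R → ℝ) (ρ : R → ℝ) (γ : ℝ)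
    (ext : H → A → O → R → H) (W : H → ℝ) (h : H) (a : A) : ℝ :=
  ∑ o, ∑ r, P h a o r * (ρ r + γ * W (ext h a o r))

theorem bellmanQ_sub_le {P : H → A → O → R → ℝ} {ρ : R → ℝ} {γ : ℝ}
    {ext : H → A → O → R → H} {W₁ W₂ : H → ℝ} {M : ℝ} (hγ0 : 0 ≤ γ)
    (hP0 : ∀ h a o r, 0 ≤ P h a o r) (hP1 : ∀ h a, ∑ o, ∑ r, P h a o r = 1)
    (hW : ∀ h, W₁ h - W₂ h ≤ M) (h : H) (a : A) :
    bellmanQ P ρ γ ext W₁ h a - bellmanQ P ρ γ ext W₂ h a ≤ γ * M := by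
  have hdiff : bellmanQ P ρ γ ext W₁ h a - bellmanQ P ρ γ ext W₂ h a =
      γ * ∑ o, ∑ r, P h a o r * (W₁ (ext h a o r) - W₂ (ext h a o r)) := by
    simp only [bellmanQ, mul_sum, ← sum_sub_distrib]
    exact sum_congr rfl fun o _ => sum_congr rfl fun r _ => by ring
  rw [hdiff]
  exact mul_le_mul_of_nonneg_left
    (sum_sum_mul_le_of_le (hP0 h a) (hP1 h a) fun o r => hW _) hγ0

theorem abs_bellmanQ_sub_le {P : H → A → O → R → ℝ} {ρ : R → ℝ} {γ : ℝ}
    {ext : H → A → O → R → H} {W₁ W₂ : H → ℝ} {M : ℝ} (hγ0 : 0 ≤ γ)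
    (hP0 : ∀ h a o r, 0 ≤ P h a o r) (hP1 : ∀ h a, ∑ o, ∑ r, P h a o r = 1)
    (hW : ∀ h, |W₁ h - W₂ h| ≤ M) (h : H) (a : A) :
    |bellmanQ P ρ γ ext W₁ h a - bellmanQ P ρ γ ext W₂ h a| ≤ γ * M :=
  abs_sub_le_iff.2
    ⟨bellmanQ_sub_le hγ0 hP0 hP1 (fun h => (abs_sub_le_iff.1 (hW h)).1) h a,
      bellmanQ_sub_le hγ0 hP0 hP1 (fun h => (abs_sub_le_iff.1 (hW h)).2) h a⟩

theorem optimal_sub_policy_value_le [Fintype A] [Nonempty A] {P : H → A → O → R → ℝ}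
    {ρ : R → ℝ} {γ : ℝ} {ext : H → A → O → R → H} {Qstar QPol : H → A → ℝ}
    {Vstar VPol : H → ℝ} {Pol : H → A} {C δ : ℝ} (hγ0 : 0 ≤ γ) (hγ1 : γ < 1)
    (hP0 : ∀ h a o r, 0 ≤ P h a o r) (hP1 : ∀ h a, ∑ o, ∑ r, P h a o r = 1)
    (hQstar : ∀ h a, Qstar h a = bellmanQ P ρ γ ext Vstar h a)
    (hVstar : ∀ h, Vstar h = univ.sup' univ_nonempty (Qstar h))
    (hVstarBnd : ∀ h, 0 ≤ Vstar h ∧ Vstar h ≤ C)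
    (hQPol : ∀ h a, QPol h a = bellmanQ P ρ γ ext VPol h a)
    (hVPol : ∀ h, VPol h = QPol h (Pol h)) (hVPolBnd : ∀ h, 0 ≤ VPol h ∧ VPol h ≤ C)
    (hgreedy : ∀ h a, Qstar h a ≤ Qstar h (Pol h) + δ) (h : H) :
    0 ≤ Vstar h - VPol h ∧ Vstar h - VPol h ≤ δ / (1 - γ) := by
  have hQ_le_V : ∀ h a, Qstar h a ≤ Vstar h := fun h a =>
    (hVstar h).symm ▸ le_sup' (Qstar h) (mem_univ a)
  have hpolicy_le : ∀ M, (∀ h, VPol h - Vstar h ≤ M) → ∀ h, VPol h - Vstar h ≤ 0 + γ * M :=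
    fun M hM h => by
      have := bellmanQ_sub_le (ρ := ρ) (ext := ext) hγ0 hP0 hP1 hM h (Pol h)
      rw [← hQPol, ← hQstar, ← hVPol] at this
      linarith [hQ_le_V h (Pol h)]
  have hstar_le : ∀ M, (∀ h, Vstar h - VPol h ≤ M) → ∀ h, Vstar h - VPol h ≤ δ + γ * M :=
    fun M hM h => by
      obtain ⟨a, -, ha⟩ := exists_mem_eq_sup' univ_nonempty (Qstar h)
      have := bellmanQ_sub_le (ρ := ρ) (ext := ext) hγ0 hP0 hP1 hM h (Pol h)
      rw [← hQPol, ← hQstar, ← hVPol] at this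
      linarith [hVstar h, hgreedy h a]
  have hlow := le_div_one_sub_of_forall_le_add_mul hγ1
    ⟨C, Set.forall_mem_range.2 fun h => by linarith [hVPolBnd h, hVstarBnd h]⟩ hpolicy_le h
  have hup := le_div_one_sub_of_forall_le_add_mul hγ1
    ⟨C, Set.forall_mem_range.2 fun h => by linarith [hVPolBnd h, hVstarBnd h]⟩ hstar_le h
  rw [zero_div] at hlow
  exact ⟨by linarith, hup⟩

theorem abs_surrogate_sub_le {S Bt : Type*} {P : H → A → O → R → ℝ} {ρ : R → ℝ} {γ : ℝ}
    {ext : H → A → O → R → H} {f : H → S} {g : H → A → Bt} {Qstar : H → A → ℝ}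
    {Vstar : H → ℝ} {B : S → Bt → H → A → ℝ} {q : S → Bt → ℝ} {v : S → ℝ} {ε M : ℝ}
    (hγ0 : 0 ≤ γ) (hP0 : ∀ h a o r, 0 ≤ P h a o r) (hP1 : ∀ h a, ∑ o, ∑ r, P h a o r = 1)
    (hQstar : ∀ h a, Qstar h a = bellmanQ P ρ γ ext Vstar h a)
    (hB0 : ∀ s b h a, 0 ≤ B s b h a)
    (hBsupp : ∀ s b h a, B s b h a ≠ 0 → f h = s ∧ g h a = b)
    (hB1 : ∀ s b, HasSum (fun x : H × A => B s b x.1 x.2) 1)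
    (hqB : ∀ s b, HasSum (fun x : H × A => B s b x.1 x.2 * bellmanQ P ρ γ ext (v ∘ f) x.1 x.2)
      (q s b))
    (hQunif : ∀ h a h' a', f h = f h' → g h a = g h' a' → |Qstar h a - Qstar h' a'| ≤ ε)
    (hM : ∀ h, |Vstar h - v (f h)| ≤ M) (h : H) (a : A) :
    |q (f h) (g h a) - Qstar h a| ≤ ε + γ * M := by
  have hw0 : ∀ x : H × A, 0 ≤ B (f h) (g h a) x.1 x.2 := fun x => hB0 _ _ _ _
  have hw1 := hB1 (f h) (g h a)
  have hqw := hqB (f h) (g h a)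
  refine abs_sub_le_of_hasSum_mul hw0 hw1 hqw fun x hx => ?_
  obtain ⟨hf, hg⟩ := hBsupp _ _ _ _ hx
  have hback : |bellmanQ P ρ γ ext (v ∘ f) x.1 x.2 - Qstar x.1 x.2| ≤ γ * M := by
    rw [hQstar]
    exact abs_bellmanQ_sub_le hγ0 hP0 hP1 (fun h => abs_sub_comm (Vstar h) _ ▸ hM h) _ _
  calc |bellmanQ P ρ γ ext (v ∘ f) x.1 x.2 - Qstar h a|
      ≤ |bellmanQ P ρ γ ext (v ∘ f) x.1 x.2 - Qstar x.1 x.2| + |Qstar x.1 x.2 - Qstar h a| :=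
        abs_sub_le _ _ _
    _ ≤ γ * M + ε := add_le_add hback (hQunif _ _ _ _ hf hg)
    _ = ε + γ * M := add_comm _ _

end Bellman

section Surrogate

variable {H A O R S : Type*} [Fintype O] [Fintype R] [Fintype S] [DecidableEq S]

theorem sum_sum_fiber_mul_eq_bellmanQ_comp (P : H → A → O → R → ℝ) (ρ : R → ℝ) (γ : ℝ)
    (ext : H → A → O → R → H) (f : H → S) (W : S → ℝ) (h : H) (a : A) :
    ∑ s, ∑ r, (∑ o ∈ univ.filter fun o => f (ext h a o r) = s, P h a o r) * (ρ r + γ * W s) =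
      bellmanQ P ρ γ ext (W ∘ f) h a := by
  simp only [bellmanQ, sum_filter, sum_mul, ite_mul, zero_mul, Function.comp]
  rw [sum_comm, eq_comm, sum_comm]
  refine sum_congr rfl fun r _ => ?_
  rw [sum_comm]
  simp only [sum_ite_eq, mem_univ, if_true]

/-- The surrogate backup of `W` is the `w`-average of the original backup of `W ∘ f`. -/
theorem hasSum_mul_bellmanQ_comp {P : H → A → O → R → ℝ} {ρ : R → ℝ} {γ : ℝ}
    {ext : H → A → O → R → H} {f : H → S} {w : H × A → ℝ} {p : S → R → ℝ}
    (hp : ∀ s r, HasSum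
      (fun x : H × A => (∑ o ∈ univ.filter fun o => f (ext x.1 x.2 o r) = s, P x.1 x.2 o r) * w x)
      (p s r))
    (W : S → ℝ) :
    HasSum (fun x : H × A => w x * bellmanQ P ρ γ ext (W ∘ f) x.1 x.2)
      (∑ s, ∑ r, p s r * (ρ r + γ * W s)) := by
  refine (hasSum_sum fun s _ => hasSum_sum fun r _ =>
    (hp s r).mul_right (ρ r + γ * W s)).congr_fun fun x => ?_
  rw [← sum_sum_fiber_mul_eq_bellmanQ_comp, mul_sum]
  exact sum_congr rfl fun s _ => by rw [mul_sum]; exact sum_congr rfl fun r _ => by ring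

end Surrogate

section Uplift

variable {H A S Bt : Type*} {f : H → S} {g : H → A → Bt} {Qstar : H → A → ℝ}
  {q : S → Bt → ℝ} {v : S → ℝ} {Pol : H → A}

theorem abs_optimal_sub_surrogate_comp_le [Fintype A] [Nonempty A] {Vstar : H → ℝ} {γ ε C : ℝ}
    (hγ1 : γ < 1) (hVstar : ∀ h, Vstar h = univ.sup' univ_nonempty (Qstar h))
    (hVstarBnd : ∀ h, 0 ≤ Vstar h ∧ Vstar h ≤ C) (hvBnd : ∀ s, 0 ≤ v s ∧ v s ≤ C)
    (hqv : ∀ s b, q s b ≤ v s) (hvPol : ∀ h, v (f h) = q (f h) (g h (Pol h)))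
    (hqQ : ∀ M, (∀ h, |Vstar h - v (f h)| ≤ M) →
      ∀ h a, |q (f h) (g h a) - Qstar h a| ≤ ε + γ * M) (h : H) :
    |Vstar h - v (f h)| ≤ ε / (1 - γ) := by
  refine le_div_one_sub_of_forall_le_add_mul hγ1 ⟨C, Set.forall_mem_range.2 fun h =>
    abs_sub_le_of_nonneg_of_le (hVstarBnd h).1 (hVstarBnd h).2 (hvBnd _).1 (hvBnd _).2⟩
    (fun M hM h => ?_) h
  obtain ⟨a, -, ha⟩ := exists_mem_eq_sup' univ_nonempty (Qstar h)
  have hopt := abs_le.1 (hqQ M hM h a)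
  have hPol := abs_le.1 (hqQ M hM h (Pol h))
  have hPol_le : Qstar h (Pol h) ≤ Vstar h := (hVstar h).symm ▸ le_sup' _ (mem_univ _)
  exact abs_sub_le_iff.2
    ⟨by linarith [hVstar h, hqv (f h) (g h a)], by linarith [hvPol h]⟩

theorem le_Qstar_uplift_add {δ : ℝ} (hqQ : ∀ h a, |q (f h) (g h a) - Qstar h a| ≤ δ)
    (hqv : ∀ s b, q s b ≤ v s) (hvPol : ∀ h, v (f h) = q (f h) (g h (Pol h))) (h : H) (a : A) :
    Qstar h a ≤ Qstar h (Pol h) + 2 * δ := by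
  have ha := abs_le.1 (hqQ h a)
  have hPol := abs_le.1 (hqQ h (Pol h))
  linarith [hqv (f h) (g h a), hvPol h]

end Uplift

theorem stmt_6_general
    {H A O R S Bt : Type*} [Fintype A] [Nonempty A] [Fintype O] [Fintype R]
    [Fintype S] [Fintype Bt] [Nonempty Bt] [DecidableEq S]
    (γ : ℝ) (hγ0 : 0 ≤ γ) (hγ1 : γ < 1)
    (ρ : R → ℝ)
    (P : H → A → O → R → ℝ)
    (hP0 : ∀ h a o r, 0 ≤ P h a o r)
    (hP1 : ∀ h a, ∑ o : O, ∑ r : R, P h a o r = 1)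
    (ext : H → A → O → R → H)
    -- the homomorphism ψ(h,a) = (f h, g h a), surjective
    (f : H → S) (g : H → A → Bt)
    -- optimal (action-)value functions of the original process
    (Qstar : H → A → ℝ) (Vstar : H → ℝ)
    (hQstar : ∀ h a, Qstar h a =
      ∑ o : O, ∑ r : R, P h a o r * (ρ r + γ * Vstar (ext h a o r)))
    (hVstar : ∀ h, Vstar h = Finset.univ.sup' Finset.univ_nonempty (Qstar h))
    (hVstarBnd : ∀ h, 0 ≤ Vstar h ∧ Vstar h ≤ 1 / (1 - γ))
    -- a stochastic inverse B : S×B → Δ(H×A), supported on ψ-preimages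
    (B : S → Bt → H → A → ℝ)
    (hB0 : ∀ s b h a, 0 ≤ B s b h a)
    (hBsupp : ∀ s b h a, B s b h a ≠ 0 → f h = s ∧ g h a = b)
    (hB1 : ∀ s b, HasSum (fun x : H × A => B s b x.1 x.2) 1)
    -- the surrogate MDP p_B(s'r|sb) = Σ_{h,a} P_ψ(s'r|ha) B(ha|sb)
    (pB : S → Bt → S → R → ℝ)
    (hpB : ∀ s b s' r, HasSum
      (fun x : H × A =>
        (∑ o ∈ Finset.univ.filter fun o => f (ext x.1 x.2 o r) = s',
          P x.1 x.2 o r) * B s b x.1 x.2)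
      (pB s b s' r))
    -- optimal (action-)value functions of the surrogate MDP p_B
    (q : S → Bt → ℝ) (v : S → ℝ)
    (hq : ∀ s b, q s b = ∑ s' : S, ∑ r : R, pB s b s' r * (ρ r + γ * v s'))
    (hv : ∀ s, v s = Finset.univ.sup' Finset.univ_nonempty (q s))
    (hvBnd : ∀ s, 0 ≤ v s ∧ v s ≤ 1 / (1 - γ))
    -- the Q-uniformity assumption
    (ε : ℝ) (hε : 0 ≤ ε)
    (hQunif : ∀ h a h' a', f h = f h' → g h a = g h' a' →
      |Qstar h a - Qstar h' a'| ≤ ε)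
    -- an optimal policy π* of the surrogate MDP p_B
    (πs : S → Bt) (hπs : ∀ s, q s (πs s) = v s)
    -- the uplifted policy Π̆ with g h (Π̆ h) = π*(f h), and its value functions
    (Pol : H → A) (hlift : ∀ h, g h (Pol h) = πs (f h))
    (QPol : H → A → ℝ) (VPol : H → ℝ)
    (hQPol : ∀ h a, QPol h a =
      ∑ o : O, ∑ r : R, P h a o r * (ρ r + γ * VPol (ext h a o r)))
    (hVPol : ∀ h, VPol h = QPol h (Pol h))
    (hVPolBnd : ∀ h, 0 ≤ VPol h ∧ VPol h ≤ 1 / (1 - γ)) :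
    ∀ h, 0 ≤ Vstar h - VPol h ∧ Vstar h - VPol h ≤ 4 * ε / (1 - γ) ^ 2 := by
  have hγ : 1 - γ ≠ 0 := by linarith
  have hqB : ∀ s b, HasSum
      (fun x : H × A => B s b x.1 x.2 * bellmanQ P ρ γ ext (v ∘ f) x.1 x.2) (q s b) :=
    fun s b => hq s b ▸ hasSum_mul_bellmanQ_comp (hpB s b) v
  have hqv : ∀ s b, q s b ≤ v s := fun s b => (hv s).symm ▸ le_sup' (q s) (mem_univ b)
  have hvPol : ∀ h, v (f h) = q (f h) (g h (Pol h)) := fun h => by rw [hlift, hπs]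
  have hqQ := fun M => abs_surrogate_sub_le hγ0 hP0 hP1 hQstar hB0 hBsupp hB1 hqB hQunif (M := M)
  have hvf := abs_optimal_sub_surrogate_comp_le hγ1 hVstar hVstarBnd hvBnd hqv hvPol hqQ
  have hgreedy := le_Qstar_uplift_add (hqQ _ hvf) hqv hvPol
  intro h
  obtain ⟨hlow, hup⟩ := optimal_sub_policy_value_le hγ0 hγ1 hP0 hP1 hQstar hVstar hVstarBnd
    hQPol hVPol hVPolBnd hgreedy h
  have hloss : 2 * (ε + γ * (ε / (1 - γ))) / (1 - γ) = 2 * ε / (1 - γ) ^ 2 := by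
    field_simp; ring
  refine ⟨hlow, hup.trans (hloss.trans_le ?_)⟩
  gcongr
  norm_num

/-- Suppose `|Q*(h,a) − Q*(h',a')| ≤ ε` for all
`ψ(h,a) = ψ(h',a')`. Let `π*` be an optimal policy of the surrogate MDP `p_B`
(for any stochastic inverse `B`), and let the uplifted policy `Π̆` satisfy
`Π̆(h) ∈ ψ_s^{-1}(π*(s))` for `f h = s`. Then
`0 ≤ V*(h) − V^{Π̆}(h) ≤ 4ε/(1−γ)²` for all histories `h`. -/
theorem stmt_6
    {H A O R S Bt : Type*} [Fintype A] [Nonempty A] [Fintype O] [Fintype R]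
    [Fintype S] [Fintype Bt] [Nonempty Bt] [DecidableEq S]
    (γ : ℝ) (hγ0 : 0 ≤ γ) (hγ1 : γ < 1)
    (ρ : R → ℝ) (hρ : ∀ r, ρ r ∈ Set.Icc (0 : ℝ) 1)
    (P : H → A → O → R → ℝ)
    (hP0 : ∀ h a o r, 0 ≤ P h a o r)
    (hP1 : ∀ h a, ∑ o : O, ∑ r : R, P h a o r = 1)
    (ext : H → A → O → R → H)
    -- the homomorphism ψ(h,a) = (f h, g h a), surjective
    (f : H → S) (g : H → A → Bt)
    (hsurj : ∀ s b, ∃ h a, f h = s ∧ g h a = b)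
    -- optimal (action-)value functions of the original process
    (Qstar : H → A → ℝ) (Vstar : H → ℝ)
    (hQstar : ∀ h a, Qstar h a =
      ∑ o : O, ∑ r : R, P h a o r * (ρ r + γ * Vstar (ext h a o r)))
    (hVstar : ∀ h, Vstar h = Finset.univ.sup' Finset.univ_nonempty (Qstar h))
    (hVstarBnd : ∀ h, 0 ≤ Vstar h ∧ Vstar h ≤ 1 / (1 - γ))
    -- a stochastic inverse B : S×B → Δ(H×A), supported on ψ-preimages
    (B : S → Bt → H → A → ℝ)
    (hB0 : ∀ s b h a, 0 ≤ B s b h a)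
    (hBsupp : ∀ s b h a, B s b h a ≠ 0 → f h = s ∧ g h a = b)
    (hB1 : ∀ s b, HasSum (fun x : H × A => B s b x.1 x.2) 1)
    -- the surrogate MDP p_B(s'r|sb) = Σ_{h,a} P_ψ(s'r|ha) B(ha|sb)
    (pB : S → Bt → S → R → ℝ)
    (hpB : ∀ s b s' r, HasSum
      (fun x : H × A =>
        (∑ o ∈ Finset.univ.filter fun o => f (ext x.1 x.2 o r) = s',
          P x.1 x.2 o r) * B s b x.1 x.2)
      (pB s b s' r))
    -- optimal (action-)value functions of the surrogate MDP p_B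
    (q : S → Bt → ℝ) (v : S → ℝ)
    (hq : ∀ s b, q s b = ∑ s' : S, ∑ r : R, pB s b s' r * (ρ r + γ * v s'))
    (hv : ∀ s, v s = Finset.univ.sup' Finset.univ_nonempty (q s))
    (hvBnd : ∀ s, 0 ≤ v s ∧ v s ≤ 1 / (1 - γ))
    -- the Q-uniformity assumption
    (ε : ℝ) (hε : 0 ≤ ε)
    (hQunif : ∀ h a h' a', f h = f h' → g h a = g h' a' →
      |Qstar h a - Qstar h' a'| ≤ ε)
    -- an optimal policy π* of the surrogate MDP p_B
    (πs : S → Bt) (hπs : ∀ s, q s (πs s) = v s)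
    -- the uplifted policy Π̆ with g h (Π̆ h) = π*(f h), and its value functions
    (Pol : H → A) (hlift : ∀ h, g h (Pol h) = πs (f h))
    (QPol : H → A → ℝ) (VPol : H → ℝ)
    (hQPol : ∀ h a, QPol h a =
      ∑ o : O, ∑ r : R, P h a o r * (ρ r + γ * VPol (ext h a o r)))
    (hVPol : ∀ h, VPol h = QPol h (Pol h))
    (hVPolBnd : ∀ h, 0 ≤ VPol h ∧ VPol h ≤ 1 / (1 - γ)) :
    ∀ h, 0 ≤ Vstar h - VPol h ∧ Vstar h - VPol h ≤ 4 * ε / (1 - γ) ^ 2 :=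
  stmt_6_general γ hγ0 hγ1 ρ P hP0 hP1 ext f g Qstar Vstar hQstar hVstar hVstarBnd B hB0 hBsupp hB1
    pB hpB q v hq hv hvBnd ε hε hQunif πs hπs Pol hlift QPol VPol hQPol hVPol hVPolBnd
end

section
/- Let Π be a policy, π any abstract policy, and B a stochastic inverse. If |V^Π(h) − v^π(s)| ≤ ε for all f(h)=s, then for all abstract state-action pairs (s,b): |⟨Q^Π(ψ^{-1}(s,b))⟩_B − q^π(s,b)| ≤ γε, where ⟨Q^Π(ψ^{-1}(s,b))⟩_B := Σ_{h,a} Q^Π(h,a) B(ha|sb). -/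
open Finset

/-- Let `Π` be a policy, `π` any abstract policy, and `B` a
stochastic inverse. If `|V^Π(h) − v^π(s)| ≤ ε` for all `f h = s`, then for all
abstract state-action pairs `(s,b)`:
`|⟨Q^Π(ψ^{-1}(s,b))⟩_B − q^π(s,b)| ≤ γε`, where
`⟨Q^Π(ψ^{-1}(s,b))⟩_B = Σ_{h,a} Q^Π(h,a) B(ha|sb)`. -/
theorem stmt_8
    {H A O R S Bt : Type*} [Fintype A] [Nonempty A] [Fintype O] [Fintype R]
    [Fintype S] [Fintype Bt] [DecidableEq S]
    (γ : ℝ) (hγ0 : 0 ≤ γ) (hγ1 : γ < 1)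
    (ρ : R → ℝ) (hρ : ∀ r, ρ r ∈ Set.Icc (0 : ℝ) 1)
    (P : H → A → O → R → ℝ)
    (hP0 : ∀ h a o r, 0 ≤ P h a o r)
    (hP1 : ∀ h a, ∑ o : O, ∑ r : R, P h a o r = 1)
    (ext : H → A → O → R → H)
    -- the homomorphism ψ(h,a) = (f h, g h a), surjective
    (f : H → S) (g : H → A → Bt)
    (hsurj : ∀ s b, ∃ h a, f h = s ∧ g h a = b)
    -- a stochastic policy Π and its (action-)value functions
    (Pol : H → A → ℝ)
    (hPol0 : ∀ h a, 0 ≤ Pol h a) (hPol1 : ∀ h, ∑ a : A, Pol h a = 1)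
    (QPol : H → A → ℝ) (VPol : H → ℝ)
    (hQPol : ∀ h a, QPol h a =
      ∑ o : O, ∑ r : R, P h a o r * (ρ r + γ * VPol (ext h a o r)))
    (hVPol : ∀ h, VPol h = ∑ a : A, QPol h a * Pol h a)
    (hVPolBnd : ∀ h, 0 ≤ VPol h ∧ VPol h ≤ 1 / (1 - γ))
    -- a stochastic inverse B supported on ψ-preimages
    (B : S → Bt → H → A → ℝ)
    (hB0 : ∀ s b h a, 0 ≤ B s b h a)
    (hBsupp : ∀ s b h a, B s b h a ≠ 0 → f h = s ∧ g h a = b)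
    (hB1 : ∀ s b, HasSum (fun x : H × A => B s b x.1 x.2) 1)
    -- the surrogate MDP p_B(s'r|sb) = Σ_{h,a} P_ψ(s'r|ha) B(ha|sb)
    (pB : S → Bt → S → R → ℝ)
    (hpB : ∀ s b s' r, HasSum
      (fun x : H × A =>
        (∑ o ∈ Finset.univ.filter fun o => f (ext x.1 x.2 o r) = s',
          P x.1 x.2 o r) * B s b x.1 x.2)
      (pB s b s' r))
    -- an abstract stochastic policy π and its value functions in p_B
    (π : S → Bt → ℝ)
    (hπ0 : ∀ s b, 0 ≤ π s b) (hπ1 : ∀ s, ∑ b : Bt, π s b = 1)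
    (q : S → Bt → ℝ) (v : S → ℝ)
    (hq : ∀ s b, q s b = ∑ s' : S, ∑ r : R, pB s b s' r * (ρ r + γ * v s'))
    (hv : ∀ s, v s = ∑ b : Bt, q s b * π s b)
    -- the B-average ⟨Q^Π(ψ^{-1}(s,b))⟩_B
    (QB : S → Bt → ℝ)
    (hQB : ∀ s b,
      HasSum (fun x : H × A => QPol x.1 x.2 * B s b x.1 x.2) (QB s b))
    -- the value-closeness assumption
    (ε : ℝ) (hVclose : ∀ h, |VPol h - v (f h)| ≤ ε) :
    ∀ s b, |QB s b - q s b| ≤ γ * ε := by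
  intro s b
  obtain ⟨h0, a0, -, -⟩ := hsurj s b
  have hε : 0 ≤ ε := le_trans (abs_nonneg _) (hVclose h0)
  -- HasSum representation of q s b
  have hqsum : HasSum (fun x : H × A => ∑ s' : S, ∑ r : R,
      ((∑ o ∈ Finset.univ.filter fun o => f (ext x.1 x.2 o r) = s',
        P x.1 x.2 o r) * B s b x.1 x.2) * (ρ r + γ * v s')) (q s b) := by
    rw [hq]
    exact hasSum_sum fun s' _ => hasSum_sum fun r _ =>
      (hpB s b s' r).mul_right (ρ r + γ * v s')
  -- the difference
  have key : ∀ x : H × A,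
      QPol x.1 x.2 * B s b x.1 x.2 - (∑ s' : S, ∑ r : R,
        ((∑ o ∈ Finset.univ.filter fun o => f (ext x.1 x.2 o r) = s',
          P x.1 x.2 o r) * B s b x.1 x.2) * (ρ r + γ * v s'))
      = γ * ((∑ o : O, ∑ r : R, P x.1 x.2 o r *
        (VPol (ext x.1 x.2 o r) - v (f (ext x.1 x.2 o r)))) * B s b x.1 x.2) := by
    rintro ⟨h, a⟩
    simp only
    have hT : (∑ s' : S, ∑ r : R,
        ((∑ o ∈ Finset.univ.filter fun o => f (ext h a o r) = s',
          P h a o r) * B s b h a) * (ρ r + γ * v s'))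
        = ∑ o : O, ∑ r : R, P h a o r * (ρ r + γ * v (f (ext h a o r))) * B s b h a := by
      rw [Finset.sum_comm]
      rw [Finset.sum_comm (s := (univ : Finset O))]
      refine Finset.sum_congr rfl fun r _ => ?_
      calc ∑ s' : S, ((∑ o ∈ Finset.univ.filter fun o => f (ext h a o r) = s',
              P h a o r) * B s b h a) * (ρ r + γ * v s')
          = ∑ s' : S, ∑ o ∈ Finset.univ.filter fun o => f (ext h a o r) = s',
              P h a o r * (ρ r + γ * v (f (ext h a o r))) * B s b h a := by
            refine Finset.sum_congr rfl fun s' _ => ?_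
            rw [Finset.sum_mul, Finset.sum_mul]
            refine Finset.sum_congr rfl fun o ho => ?_
            rw [(Finset.mem_filter.mp ho).2]
            ring
        _ = _ := Finset.sum_fiberwise _ _ _
    rw [hT, hQPol]
    simp only [Finset.sum_mul, Finset.mul_sum, ← Finset.sum_sub_distrib]
    exact Finset.sum_congr rfl fun o _ => Finset.sum_congr rfl fun r _ => by ring
  have hdiff : HasSum (fun x : H × A =>
      γ * ((∑ o : O, ∑ r : R, P x.1 x.2 o r *
        (VPol (ext x.1 x.2 o r) - v (f (ext x.1 x.2 o r)))) * B s b x.1 x.2))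
      (QB s b - q s b) := (funext key) ▸ ((hQB s b).sub hqsum)
  -- pointwise bound
  have hbnd : ∀ x : H × A,
      |γ * ((∑ o : O, ∑ r : R, P x.1 x.2 o r *
        (VPol (ext x.1 x.2 o r) - v (f (ext x.1 x.2 o r)))) * B s b x.1 x.2)|
      ≤ γ * ε * B s b x.1 x.2 := by
    rintro ⟨h, a⟩
    simp only
    rw [abs_mul, abs_mul, abs_of_nonneg hγ0, abs_of_nonneg (hB0 s b h a),
      mul_assoc]
    refine mul_le_mul_of_nonneg_left (mul_le_mul_of_nonneg_right ?_ (hB0 s b h a)) hγ0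
    calc |∑ o : O, ∑ r : R, P h a o r * (VPol (ext h a o r) - v (f (ext h a o r)))|
        ≤ ∑ o : O, ∑ r : R, |P h a o r * (VPol (ext h a o r) - v (f (ext h a o r)))| := by
          refine le_trans (Finset.abs_sum_le_sum_abs _ _) ?_
          exact Finset.sum_le_sum fun o _ => Finset.abs_sum_le_sum_abs _ _
      _ ≤ ∑ o : O, ∑ r : R, P h a o r * ε := by
          refine Finset.sum_le_sum fun o _ => Finset.sum_le_sum fun r _ => ?_
          rw [abs_mul, abs_of_nonneg (hP0 h a o r)]
          exact mul_le_mul_of_nonneg_left (hVclose _) (hP0 h a o r)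
      _ = ε := by simp only [← Finset.sum_mul]; rw [hP1 h a, one_mul]
  have hmaj : HasSum (fun x : H × A => γ * ε * B s b x.1 x.2) (γ * ε) := by
    simpa using (hB1 s b).mul_left (γ * ε)
  rw [abs_le]
  constructor
  · exact neg_le_of_neg_le (by
      have := hasSum_le (fun x => (abs_le.mp (hbnd x)).1) hmaj.neg hdiff
      linarith)
  · exact hasSum_le (fun x => le_trans (le_abs_self _) (hbnd x)) hdiff hmaj
end

section
/- Let Π be any policy and s an abstract state with f(h)=s. Then |V^Π(h) − Σ_b Q^Π(ψ^{-1}(s,b)) π_R(b|s)| ≤ ε_Q(s) + ε_Π(s)/(1−γ), where Q^Π(ψ^{-1}(s,b)) is a fixed representative value Q^Π(h̃,ã) for some ψ(h̃,ã)=(s,b), ε_Q(s) := sup over ψ(h̃,ã)=(s,b̃) of |Q^Π(ψ^{-1}(s,b̃)) − Q^Π(h̃,ã)|, and ε_Π(s) := sup_{h̃: f(h̃)=s} ||π_R(·|s) − Π_ψ(·|h̃)||₁. -/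
open Finset

/-- Let `Π` be any policy and `s` an abstract state with `f h = s`.
Then `|V^Π(h) − Σ_b Q^Π(ψ^{-1}(s,b)) π_R(b|s)| ≤ ε_Q(s) + ε_Π(s)/(1−γ)`, where
`Q^Π(ψ^{-1}(s,b))` is a fixed representative value, `ε_Q(s)` bounds the
action-value representation error, and `ε_Π(s)` bounds the policy
representation error `‖π_R(·|s) − Π_ψ(·|h̃)‖₁`. -/
theorem stmt_9
    {H A S Bt : Type*} [Fintype A] [Fintype S] [Fintype Bt] [DecidableEq Bt]
    (γ : ℝ) (hγ0 : 0 ≤ γ) (hγ1 : γ < 1)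
    -- the homomorphism ψ(h,a) = (f h, g h a), surjective
    (f : H → S) (g : H → A → Bt)
    (hsurj : ∀ s b, ∃ h a, f h = s ∧ g h a = b)
    -- a stochastic policy Π and its (action-)value functions (bounded)
    (Pol : H → A → ℝ)
    (hPol0 : ∀ h a, 0 ≤ Pol h a) (hPol1 : ∀ h, ∑ a : A, Pol h a = 1)
    (QPol : H → A → ℝ) (VPol : H → ℝ)
    (hQPolBnd : ∀ h a, 0 ≤ QPol h a ∧ QPol h a ≤ 1 / (1 - γ))
    (hVPol : ∀ h, VPol h = ∑ a : A, QPol h a * Pol h a)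
    -- the fixed representative action-values Q^Π(ψ^{-1}(s,b))
    (Qrep : S → Bt → ℝ)
    (hQrep : ∀ s b, ∃ h a, f h = s ∧ g h a = b ∧ Qrep s b = QPol h a)
    -- ε_Q(s) bounds |Q^Π(ψ^{-1}(s,b̃)) − Q^Π(h̃,ã)| over all ψ(h̃,ã) = (s,b̃)
    (εQ : S → ℝ)
    (hεQ : ∀ h a, |Qrep (f h) (g h a) - QPol h a| ≤ εQ (f h))
    -- the representative abstract policy π_R(·|s) := Π_ψ(·|h̃), f h̃ = s
    (πR : S → Bt → ℝ)
    (hπR : ∀ s, ∃ h, f h = s ∧ ∀ b,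
      πR s b = ∑ a ∈ Finset.univ.filter fun a => g h a = b, Pol h a)
    -- ε_Π(s) bounds ‖π_R(·|s) − Π_ψ(·|h̃)‖₁ over all h̃ with f h̃ = s
    (εP : S → ℝ)
    (hεP : ∀ h, (∑ b : Bt,
        |πR (f h) b - ∑ a ∈ Finset.univ.filter fun a => g h a = b, Pol h a|)
      ≤ εP (f h)) :
    ∀ h, |VPol h - ∑ b : Bt, Qrep (f h) b * πR (f h) b|
      ≤ εQ (f h) + εP (f h) / (1 - γ) := by

  intro h
  have h1γ : 0 < 1 - γ := by linarith
  have hQrepBnd : ∀ b, 0 ≤ Qrep (f h) b ∧ Qrep (f h) b ≤ 1 / (1 - γ) := by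
    intro b
    obtain ⟨h', a', hf', hg', he⟩ := hQrep (f h) b
    rw [he]; exact hQPolBnd h' a'
  set P : Bt → ℝ := fun b => ∑ a ∈ Finset.univ.filter fun a => g h a = b, Pol h a with hP
  have fib : ∑ b : Bt, Qrep (f h) b * P b = ∑ a : A, Qrep (f h) (g h a) * Pol h a := by
    rw [← Finset.sum_fiberwise Finset.univ (fun a => g h a) (fun a => Qrep (f h) (g h a) * Pol h a)]
    refine Finset.sum_congr rfl fun b _ => ?_
    rw [hP, Finset.mul_sum]
    refine Finset.sum_congr rfl fun a ha => ?_
    simp only [Finset.mem_filter] at ha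
    rw [ha.2]
  have key : VPol h - ∑ b : Bt, Qrep (f h) b * πR (f h) b
      = (∑ a : A, (QPol h a - Qrep (f h) (g h a)) * Pol h a)
        + ∑ b : Bt, Qrep (f h) b * (P b - πR (f h) b) := by
    rw [hVPol]
    have e1 : ∑ a : A, (QPol h a - Qrep (f h) (g h a)) * Pol h a
        = ∑ a : A, QPol h a * Pol h a - ∑ a : A, Qrep (f h) (g h a) * Pol h a := by
      rw [← Finset.sum_sub_distrib]; exact Finset.sum_congr rfl fun a _ => by ring
    have e2 : ∑ b : Bt, Qrep (f h) b * (P b - πR (f h) b)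
        = ∑ b : Bt, Qrep (f h) b * P b - ∑ b : Bt, Qrep (f h) b * πR (f h) b := by
      rw [← Finset.sum_sub_distrib]; exact Finset.sum_congr rfl fun b _ => by ring
    rw [e1, e2, fib]; ring
  rw [key]
  have b1 : |∑ a : A, (QPol h a - Qrep (f h) (g h a)) * Pol h a| ≤ εQ (f h) := by
    calc |∑ a : A, (QPol h a - Qrep (f h) (g h a)) * Pol h a|
        ≤ ∑ a : A, |(QPol h a - Qrep (f h) (g h a)) * Pol h a| := Finset.abs_sum_le_sum_abs _ _
      _ ≤ ∑ a : A, εQ (f h) * Pol h a := by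
          refine Finset.sum_le_sum fun a _ => ?_
          rw [abs_mul, abs_of_nonneg (hPol0 h a)]
          refine mul_le_mul_of_nonneg_right ?_ (hPol0 h a)
          rw [abs_sub_comm]; exact hεQ h a
      _ = εQ (f h) := by rw [← Finset.mul_sum, hPol1 h, mul_one]
  have b2 : |∑ b : Bt, Qrep (f h) b * (P b - πR (f h) b)| ≤ εP (f h) / (1 - γ) := by
    calc |∑ b : Bt, Qrep (f h) b * (P b - πR (f h) b)|
        ≤ ∑ b : Bt, |Qrep (f h) b * (P b - πR (f h) b)| := Finset.abs_sum_le_sum_abs _ _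
      _ ≤ ∑ b : Bt, (1 / (1 - γ)) * |πR (f h) b - P b| := by
          refine Finset.sum_le_sum fun b _ => ?_
          rw [abs_mul, abs_of_nonneg (hQrepBnd b).1, abs_sub_comm]
          exact mul_le_mul_of_nonneg_right (hQrepBnd b).2 (abs_nonneg _)
      _ = (1 / (1 - γ)) * ∑ b : Bt, |πR (f h) b - P b| := by rw [Finset.mul_sum]
      _ ≤ (1 / (1 - γ)) * εP (f h) := by
          refine mul_le_mul_of_nonneg_left (hεP h) (by positivity)
      _ = εP (f h) / (1 - γ) := by ring
  calc |(∑ a : A, (QPol h a - Qrep (f h) (g h a)) * Pol h a)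
        + ∑ b : Bt, Qrep (f h) b * (P b - πR (f h) b)|
      ≤ |∑ a : A, (QPol h a - Qrep (f h) (g h a)) * Pol h a|
        + |∑ b : Bt, Qrep (f h) b * (P b - πR (f h) b)| := abs_add_le _ _
    _ ≤ εQ (f h) + εP (f h) / (1 - γ) := add_le_add b1 b2
end

section
/- Let Π be a policy with |V^Π(h) − V^Π(h')| ≤ ε for all f(h)=f(h'), and suppose the stochastic inverse B satisfies |Σ_a Q^Π(h,a) B^{π_R}(a|hs) − V^Π(h)| ≤ ε_B for all s=f(h). Then |⟨Q^Π(ψ^{-1}(s,b))⟩_B − q^{π_R}(s,b)| ≤ γ(ε+ε_B)/(1−γ) and |V^Π(h) − v^{π_R}(s)| ≤ (ε+ε_B)/(1−γ) for all ψ(h,a)=(s,b). -/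
open Finset

private lemma abs_hasSum_le' {ι : Type*} {f g : ι → ℝ} {S T : ℝ}
    (hf : HasSum f S) (hg : HasSum g T) (h : ∀ i, |f i| ≤ g i) : |S| ≤ T := by
  rw [abs_le]
  refine ⟨?_, hasSum_le (fun i => (abs_le.mp (h i)).2) hf hg⟩
  exact hasSum_le (fun i => (abs_le.mp (h i)).1) hg.neg hf

/-- Let `Π` be a policy with `|V^Π(h) − V^Π(h')| ≤ ε` for all
`f h = f h'`, and suppose the stochastic inverse `B` satisfies
`|Σ_a Q^Π(h,a) B^{π_R}(a|hs) − V^Π(h)| ≤ ε_B` for all `s = f h`. Then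
`|⟨Q^Π(ψ^{-1}(s,b))⟩_B − q^{π_R}(s,b)| ≤ γ(ε+ε_B)/(1−γ)` and
`|V^Π(h) − v^{π_R}(s)| ≤ (ε+ε_B)/(1−γ)` for all `ψ(h,a) = (s,b)`. -/
theorem stmt_12
    {H A O R S Bt : Type*} [Fintype A] [Nonempty A] [Fintype O] [Fintype R]
    [Fintype S] [Fintype Bt] [DecidableEq S] [DecidableEq Bt]
    (γ : ℝ) (hγ0 : 0 ≤ γ) (hγ1 : γ < 1)
    (ρ : R → ℝ) (hρ : ∀ r, ρ r ∈ Set.Icc (0 : ℝ) 1)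
    (P : H → A → O → R → ℝ)
    (hP0 : ∀ h a o r, 0 ≤ P h a o r)
    (hP1 : ∀ h a, ∑ o : O, ∑ r : R, P h a o r = 1)
    (ext : H → A → O → R → H)
    -- the homomorphism ψ(h,a) = (f h, g h a), surjective
    (f : H → S) (g : H → A → Bt)
    (hsurj : ∀ s b, ∃ h a, f h = s ∧ g h a = b)
    -- a stochastic policy Π and its (action-)value functions
    (Pol : H → A → ℝ)
    (hPol0 : ∀ h a, 0 ≤ Pol h a) (hPol1 : ∀ h, ∑ a : A, Pol h a = 1)
    (QPol : H → A → ℝ) (VPol : H → ℝ)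
    (hQPol : ∀ h a, QPol h a =
      ∑ o : O, ∑ r : R, P h a o r * (ρ r + γ * VPol (ext h a o r)))
    (hVPol : ∀ h, VPol h = ∑ a : A, QPol h a * Pol h a)
    (hVPolBnd : ∀ h, 0 ≤ VPol h ∧ VPol h ≤ 1 / (1 - γ))
    -- the representative abstract policy π_R(·|s) := Π_ψ(·|h̃), f h̃ = s
    (πR : S → Bt → ℝ)
    (hπR : ∀ s, ∃ h, f h = s ∧ ∀ b,
      πR s b = ∑ a ∈ Finset.univ.filter fun a => g h a = b, Pol h a)
    -- a stochastic inverse B supported on ψ-preimages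
    (B : S → Bt → H → A → ℝ)
    (hB0 : ∀ s b h a, 0 ≤ B s b h a)
    (hBsupp : ∀ s b h a, B s b h a ≠ 0 → f h = s ∧ g h a = b)
    (hB1 : ∀ s b, HasSum (fun x : H × A => B s b x.1 x.2) 1)
    -- its action-independent part B(h|s): a distribution on f⁻¹(s)
    (BH : S → H → ℝ)
    (hBH0 : ∀ s h, 0 ≤ BH s h)
    (hBHsupp : ∀ s h, BH s h ≠ 0 → f h = s)
    (hBH1 : ∀ s, HasSum (BH s) 1)
    -- the induced measure B^{π_R}(a|hs) = Σ_b (B(ab|h)/B(b|s)) π_R(b|s),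
    -- characterized via the decomposition B(ha|sb) = B(h|s)·B(ab|h)/B(b|s)
    (Bπ : S → H → A → ℝ)
    (hBdec : ∀ s h a, (∑ b : Bt, B s b h a * πR s b) = BH s h * Bπ s h a)
    -- the surrogate MDP p_B(s'r|sb) = Σ_{h,a} P_ψ(s'r|ha) B(ha|sb)
    (pB : S → Bt → S → R → ℝ)
    (hpB : ∀ s b s' r, HasSum
      (fun x : H × A =>
        (∑ o ∈ Finset.univ.filter fun o => f (ext x.1 x.2 o r) = s',
          P x.1 x.2 o r) * B s b x.1 x.2)
      (pB s b s' r))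
    -- (action-)value functions of π_R in the surrogate MDP p_B
    (q : S → Bt → ℝ) (v : S → ℝ)
    (hq : ∀ s b, q s b = ∑ s' : S, ∑ r : R, pB s b s' r * (ρ r + γ * v s'))
    (hv : ∀ s, v s = ∑ b : Bt, q s b * πR s b)
    (hvBnd : ∀ s, 0 ≤ v s ∧ v s ≤ 1 / (1 - γ))
    -- the B-average ⟨Q^Π(ψ^{-1}(s,b))⟩_B
    (QB : S → Bt → ℝ)
    (hQB : ∀ s b,
      HasSum (fun x : H × A => QPol x.1 x.2 * B s b x.1 x.2) (QB s b))
    -- the V-uniformity assumption and the ε_B condition on B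
    (ε εB : ℝ) (hε : 0 ≤ ε) (hεB : 0 ≤ εB)
    (hVunif : ∀ h h', f h = f h' → |VPol h - VPol h'| ≤ ε)
    (hBcond : ∀ h, |(∑ a : A, QPol h a * Bπ (f h) h a) - VPol h| ≤ εB) :
    ∀ h a,
      |QB (f h) (g h a) - q (f h) (g h a)| ≤ γ * (ε + εB) / (1 - γ) ∧
      |VPol h - v (f h)| ≤ (ε + εB) / (1 - γ) := by
  have h1γ : (0:ℝ) < 1 - γ := by linarith
  have hπR0 : ∀ s b, 0 ≤ πR s b := by
    intro s b; obtain ⟨h, -, hpb⟩ := hπR s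
    rw [hpb b]; exact Finset.sum_nonneg fun a _ => hPol0 h a
  have hπR1 : ∀ s, ∑ b : Bt, πR s b = 1 := by
    intro s; obtain ⟨h, -, hpb⟩ := hπR s
    simp_rw [hpb]
    rw [Finset.sum_fiberwise]
    exact hPol1 h
  intro h₀ a₀
  have : Nonempty H := ⟨h₀⟩
  have hMbdd : BddAbove (Set.range fun h : H => |VPol h - v (f h)|) := by
    refine ⟨1 / (1 - γ), ?_⟩
    rintro x ⟨h, rfl⟩
    have h1 := hVPolBnd h; have h2 := hvBnd (f h)
    rw [abs_le]
    exact ⟨by linarith [h1.1, h2.2], by linarith [h1.2, h2.1]⟩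
  set M : ℝ := ⨆ h : H, |VPol h - v (f h)| with hMdef
  have hMle : ∀ h : H, |VPol h - v (f h)| ≤ M := fun h => le_ciSup hMbdd h
  have hM0 : 0 ≤ M := le_trans (abs_nonneg _) (hMle h₀)
  -- Claim A: |QB s b - q s b| ≤ γ M
  have claimA : ∀ s b, |QB s b - q s b| ≤ γ * M := by
    intro s b
    have hqsum : HasSum (fun x : H × A =>
        (∑ o : O, ∑ r : R, P x.1 x.2 o r * (ρ r + γ * v (f (ext x.1 x.2 o r)))) * B s b x.1 x.2)
        (q s b) := by
      have h1 : HasSum (fun x : H × A => ∑ p : S × R,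
          ((∑ o ∈ Finset.univ.filter fun o => f (ext x.1 x.2 o p.2) = p.1, P x.1 x.2 o p.2)
            * B s b x.1 x.2) * (ρ p.2 + γ * v p.1))
          (∑ p : S × R, pB s b p.1 p.2 * (ρ p.2 + γ * v p.1)) :=
        hasSum_sum fun p _ => (hpB s b p.1 p.2).mul_right _
      have h2 : (∑ p : S × R, pB s b p.1 p.2 * (ρ p.2 + γ * v p.1)) = q s b := by
        rw [hq s b, Fintype.sum_prod_type]
      have h3 : ∀ x : H × A, (∑ p : S × R,
          ((∑ o ∈ Finset.univ.filter fun o => f (ext x.1 x.2 o p.2) = p.1, P x.1 x.2 o p.2)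
            * B s b x.1 x.2) * (ρ p.2 + γ * v p.1))
          = (∑ o : O, ∑ r : R, P x.1 x.2 o r * (ρ r + γ * v (f (ext x.1 x.2 o r)))) * B s b x.1 x.2 := by
        intro x
        have key : ∀ r : R,
            (∑ s' : S, ∑ o ∈ Finset.univ.filter fun o => f (ext x.1 x.2 o r) = s',
              P x.1 x.2 o r * (ρ r + γ * v s'))
            = ∑ o : O, P x.1 x.2 o r * (ρ r + γ * v (f (ext x.1 x.2 o r))) := by
          intro r
          rw [← Finset.sum_fiberwise (Finset.univ) (fun o => f (ext x.1 x.2 o r))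
            (fun o => P x.1 x.2 o r * (ρ r + γ * v (f (ext x.1 x.2 o r))))]
          refine Finset.sum_congr rfl fun s' _ => Finset.sum_congr rfl fun o ho => ?_
          rw [(Finset.mem_filter.mp ho).2]
        have comm1 : ∀ p : S × R,
            (∑ o ∈ Finset.univ.filter fun o => f (ext x.1 x.2 o p.2) = p.1, P x.1 x.2 o p.2)
              * B s b x.1 x.2 * (ρ p.2 + γ * v p.1)
            = ((∑ o ∈ Finset.univ.filter fun o => f (ext x.1 x.2 o p.2) = p.1, P x.1 x.2 o p.2)
              * (ρ p.2 + γ * v p.1)) * B s b x.1 x.2 := fun p => by ring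
        simp_rw [comm1, ← Finset.sum_mul]
        congr 1
        rw [Fintype.sum_prod_type, Finset.sum_comm,
          show (∑ o : O, ∑ r : R, P x.1 x.2 o r * (ρ r + γ * v (f (ext x.1 x.2 o r))))
            = ∑ r : R, ∑ o : O, P x.1 x.2 o r * (ρ r + γ * v (f (ext x.1 x.2 o r))) from
              Finset.sum_comm]
        refine Finset.sum_congr rfl fun r _ => ?_
        rw [← key r]
        exact Finset.sum_congr rfl fun s' _ => Finset.sum_mul _ _ _
      rw [h2] at h1
      simp_rw [h3] at h1
      exact h1
    have hQBsum : HasSum (fun x : H × A =>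
        (∑ o : O, ∑ r : R, P x.1 x.2 o r * (ρ r + γ * VPol (ext x.1 x.2 o r))) * B s b x.1 x.2)
        (QB s b) := by
      have h1 := hQB s b
      simp_rw [hQPol] at h1
      exact h1
    have hdiff := hQBsum.sub hqsum
    have hbound : ∀ x : H × A,
        |(∑ o : O, ∑ r : R, P x.1 x.2 o r * (ρ r + γ * VPol (ext x.1 x.2 o r))) * B s b x.1 x.2
          - (∑ o : O, ∑ r : R, P x.1 x.2 o r * (ρ r + γ * v (f (ext x.1 x.2 o r)))) * B s b x.1 x.2|
        ≤ (γ * M) * B s b x.1 x.2 := by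
      intro x
      rw [← sub_mul, abs_mul, abs_of_nonneg (hB0 _ _ _ _)]
      refine mul_le_mul_of_nonneg_right ?_ (hB0 _ _ _ _)
      rw [← Finset.sum_sub_distrib]
      simp_rw [← Finset.sum_sub_distrib]
      have heq : ∀ o r, P x.1 x.2 o r * (ρ r + γ * VPol (ext x.1 x.2 o r))
          - P x.1 x.2 o r * (ρ r + γ * v (f (ext x.1 x.2 o r)))
          = P x.1 x.2 o r * (γ * (VPol (ext x.1 x.2 o r) - v (f (ext x.1 x.2 o r)))) :=
        fun o r => by ring
      simp_rw [heq]
      calc |∑ o : O, ∑ r : R, P x.1 x.2 o r * (γ * (VPol (ext x.1 x.2 o r) - v (f (ext x.1 x.2 o r))))|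
          ≤ ∑ o : O, ∑ r : R, |P x.1 x.2 o r * (γ * (VPol (ext x.1 x.2 o r) - v (f (ext x.1 x.2 o r))))| := by
            refine le_trans (Finset.abs_sum_le_sum_abs _ _) (Finset.sum_le_sum fun o _ =>
              Finset.abs_sum_le_sum_abs _ _)
        _ ≤ ∑ o : O, ∑ r : R, P x.1 x.2 o r * (γ * M) := by
            refine Finset.sum_le_sum fun o _ => Finset.sum_le_sum fun r _ => ?_
            rw [abs_mul, abs_of_nonneg (hP0 _ _ _ _), abs_mul, abs_of_nonneg hγ0]
            exact mul_le_mul_of_nonneg_left (mul_le_mul_of_nonneg_left (hMle _) hγ0) (hP0 _ _ _ _)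
        _ = γ * M := by
            simp_rw [← Finset.sum_mul]
            rw [hP1, one_mul]
    have hγMB : HasSum (fun x : H × A => (γ * M) * B s b x.1 x.2) (γ * M) := by
      simpa using (hB1 s b).mul_left (γ * M)
    exact abs_hasSum_le' hdiff hγMB hbound
  -- Claim B: |VPol h - v (f h)| ≤ (ε + εB) + γ M
  have claimB : ∀ h1 : H, |VPol h1 - v (f h1)| ≤ (ε + εB) + γ * M := by
    intro h1
    set s := f h1 with hs
    set W : ℝ := ∑ b : Bt, QB s b * πR s b with hW
    have h1' : HasSum (fun x : H × A => ∑ b : Bt, QPol x.1 x.2 * B s b x.1 x.2 * πR s b) W :=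
      hasSum_sum fun b _ => (hQB s b).mul_right (πR s b)
    have h2' : ∀ x : H × A, (∑ b : Bt, QPol x.1 x.2 * B s b x.1 x.2 * πR s b)
        = QPol x.1 x.2 * (BH s x.1 * Bπ s x.1 x.2) := by
      intro x
      simp_rw [mul_assoc, ← Finset.mul_sum]
      rw [hBdec]
    simp_rw [h2'] at h1'
    have hfib : HasSum (fun h' : H => BH s h' * ∑ a' : A, QPol h' a' * Bπ s h' a') W := by
      refine h1'.prod_fiberwise fun h' => ?_
      have heq : (BH s h' * ∑ a' : A, QPol h' a' * Bπ s h' a')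
          = ∑ a' : A, QPol h' a' * (BH s h' * Bπ s h' a') := by
        rw [Finset.mul_sum]; exact Finset.sum_congr rfl fun a' _ => by ring
      rw [heq]
      exact hasSum_fintype _
    have hconst : HasSum (fun h' : H => BH s h' * VPol h1) (VPol h1) := by
      simpa using (hBH1 s).mul_right (VPol h1)
    have hdiffB := hfib.sub hconst
    have hbB : ∀ h' : H,
        |BH s h' * (∑ a' : A, QPol h' a' * Bπ s h' a') - BH s h' * VPol h1|
        ≤ BH s h' * (ε + εB) := by
      intro h'
      by_cases hz : BH s h' = 0
      · simp [hz]
      · have hfs : f h' = s := hBHsupp s h' hz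
        rw [← mul_sub, abs_mul, abs_of_nonneg (hBH0 s h')]
        refine mul_le_mul_of_nonneg_left ?_ (hBH0 s h')
        have hc1 := hBcond h'
        rw [hfs] at hc1
        have hc2 := hVunif h' h1 (by rw [hfs])
        calc |(∑ a' : A, QPol h' a' * Bπ s h' a') - VPol h1|
            ≤ |(∑ a' : A, QPol h' a' * Bπ s h' a') - VPol h'| + |VPol h' - VPol h1| :=
              abs_sub_le _ _ _
          _ ≤ εB + ε := add_le_add hc1 hc2
          _ = ε + εB := by ring
    have hεsum : HasSum (fun h' : H => BH s h' * (ε + εB)) (ε + εB) := by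
      simpa using (hBH1 s).mul_right (ε + εB)
    have hWV : |W - VPol h1| ≤ ε + εB := abs_hasSum_le' hdiffB hεsum hbB
    have hWv : |W - v s| ≤ γ * M := by
      rw [hv s, hW, ← Finset.sum_sub_distrib]
      calc |∑ b : Bt, (QB s b * πR s b - q s b * πR s b)|
          ≤ ∑ b : Bt, |(QB s b - q s b) * πR s b| := by
            simp_rw [← sub_mul]; exact Finset.abs_sum_le_sum_abs _ _
        _ ≤ ∑ b : Bt, (γ * M) * πR s b := Finset.sum_le_sum fun b _ => by
            rw [abs_mul, abs_of_nonneg (hπR0 s b)]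
            exact mul_le_mul_of_nonneg_right (claimA s b) (hπR0 s b)
        _ = γ * M := by rw [← Finset.mul_sum, hπR1 s, mul_one]
    calc |VPol h1 - v s| ≤ |VPol h1 - W| + |W - v s| := abs_sub_le _ _ _
      _ ≤ (ε + εB) + γ * M := add_le_add (by rw [abs_sub_comm]; exact hWV) hWv
  have hMineq : M ≤ (ε + εB) + γ * M := ciSup_le claimB
  have hMfin : M ≤ (ε + εB) / (1 - γ) := by
    rw [le_div_iff₀ h1γ]; nlinarith
  have hkey : (ε + εB) + γ * ((ε + εB) / (1 - γ)) = (ε + εB) / (1 - γ) := by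
    field_simp
    ring
  constructor
  · calc |QB (f h₀) (g h₀ a₀) - q (f h₀) (g h₀ a₀)| ≤ γ * M := claimA _ _
      _ ≤ γ * (ε + εB) / (1 - γ) := by
          rw [mul_div_assoc]
          exact mul_le_mul_of_nonneg_left hMfin hγ0
  · calc |VPol h₀ - v (f h₀)| ≤ (ε + εB) + γ * M := claimB h₀
      _ ≤ (ε + εB) / (1 - γ) := by
          have h5 : γ * M ≤ γ * ((ε + εB) / (1 - γ)) := mul_le_mul_of_nonneg_left hMfin hγ0
          linarith [hkey]
end

section
/- Under the V-uniform assumptions |V*(h) − V*(h')| ≤ ε for all f(h)=f(h') and |Σ_a Q*(h,a) B^{π*}(a|hs) − V*(h)| ≤ ε_B for all s=f(h), it holds for all ψ(h,a)=(s,b): |⟨Q*(ψ^{-1}(s,b))⟩_B − q*(s,b)| ≤ 3γ(ε+ε_B)/(1−γ)² and |V*(h) − v*(s)| ≤ 3(ε+ε_B)/(1−γ)². -/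
open Finset

/-- Under the V-uniform assumptions `|V*(h) − V*(h')| ≤ ε` for
all `f h = f h'` and `|Σ_a Q*(h,a) B^{π*}(a|hs) − V*(h)| ≤ ε_B` for all
`s = f h`, it holds for all `ψ(h,a) = (s,b)`:
`|⟨Q*(ψ^{-1}(s,b))⟩_B − q*(s,b)| ≤ 3γ(ε+ε_B)/(1−γ)²` and
`|V*(h) − v*(s)| ≤ 3(ε+ε_B)/(1−γ)²`. -/
theorem stmt_14
    {H A O R S Bt : Type*} [Fintype A] [Nonempty A] [Fintype O] [Fintype R]
    [Fintype S] [Fintype Bt] [Nonempty Bt] [DecidableEq S]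
    (γ : ℝ) (hγ0 : 0 ≤ γ) (hγ1 : γ < 1)
    (ρ : R → ℝ) (hρ : ∀ r, ρ r ∈ Set.Icc (0 : ℝ) 1)
    (P : H → A → O → R → ℝ)
    (hP0 : ∀ h a o r, 0 ≤ P h a o r)
    (hP1 : ∀ h a, ∑ o : O, ∑ r : R, P h a o r = 1)
    (ext : H → A → O → R → H)
    -- the homomorphism ψ(h,a) = (f h, g h a), surjective
    (f : H → S) (g : H → A → Bt)
    (hsurj : ∀ s b, ∃ h a, f h = s ∧ g h a = b)
    -- optimal (action-)value functions of the original process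
    (Qstar : H → A → ℝ) (Vstar : H → ℝ)
    (hQstar : ∀ h a, Qstar h a =
      ∑ o : O, ∑ r : R, P h a o r * (ρ r + γ * Vstar (ext h a o r)))
    (hVstar : ∀ h, Vstar h = Finset.univ.sup' Finset.univ_nonempty (Qstar h))
    (hVstarBnd : ∀ h, 0 ≤ Vstar h ∧ Vstar h ≤ 1 / (1 - γ))
    -- an optimal deterministic policy Π* of the original process
    (Pols : H → A) (hPols : ∀ h, Qstar h (Pols h) = Vstar h)
    -- a stochastic inverse B supported on ψ-preimages
    (B : S → Bt → H → A → ℝ)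
    (hB0 : ∀ s b h a, 0 ≤ B s b h a)
    (hBsupp : ∀ s b h a, B s b h a ≠ 0 → f h = s ∧ g h a = b)
    (hB1 : ∀ s b, HasSum (fun x : H × A => B s b x.1 x.2) 1)
    -- its action-independent part B(h|s): a distribution on f⁻¹(s)
    (BH : S → H → ℝ)
    (hBH0 : ∀ s h, 0 ≤ BH s h)
    (hBHsupp : ∀ s h, BH s h ≠ 0 → f h = s)
    (hBH1 : ∀ s, HasSum (BH s) 1)
    -- the surrogate MDP p_B(s'r|sb) = Σ_{h,a} P_ψ(s'r|ha) B(ha|sb)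
    (pB : S → Bt → S → R → ℝ)
    (hpB : ∀ s b s' r, HasSum
      (fun x : H × A =>
        (∑ o ∈ Finset.univ.filter fun o => f (ext x.1 x.2 o r) = s',
          P x.1 x.2 o r) * B s b x.1 x.2)
      (pB s b s' r))
    -- optimal (action-)value functions and an optimal policy π* of p_B
    (q : S → Bt → ℝ) (v : S → ℝ)
    (hq : ∀ s b, q s b = ∑ s' : S, ∑ r : R, pB s b s' r * (ρ r + γ * v s'))
    (hv : ∀ s, v s = Finset.univ.sup' Finset.univ_nonempty (q s))
    (hvBnd : ∀ s, 0 ≤ v s ∧ v s ≤ 1 / (1 - γ))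
    (πs : S → Bt) (hπs : ∀ s, q s (πs s) = v s)
    -- the induced measure B^{π*}(a|hs) = Σ_b (B(ab|h)/B(b|s)) [b = π*(s)],
    -- characterized via the decomposition B(ha|sb) = B(h|s)·B(ab|h)/B(b|s)
    (Bπ : S → H → A → ℝ)
    (hBdec : ∀ s h a, B s (πs s) h a = BH s h * Bπ s h a)
    -- the B-average ⟨Q*(ψ^{-1}(s,b))⟩_B
    (QB : S → Bt → ℝ)
    (hQB : ∀ s b,
      HasSum (fun x : H × A => Qstar x.1 x.2 * B s b x.1 x.2) (QB s b))
    -- the V-uniformity assumption and the ε_B condition on B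
    (ε εB : ℝ) (hε : 0 ≤ ε) (hεB : 0 ≤ εB)
    (hVunif : ∀ h h', f h = f h' → |Vstar h - Vstar h'| ≤ ε)
    (hBcond : ∀ h, |(∑ a : A, Qstar h a * Bπ (f h) h a) - Vstar h| ≤ εB) :
    ∀ h a,
      |QB (f h) (g h a) - q (f h) (g h a)|
        ≤ 3 * γ * (ε + εB) / (1 - γ) ^ 2 ∧
      |Vstar h - v (f h)| ≤ 3 * (ε + εB) / (1 - γ) ^ 2 := by
  have h1γ : (0:ℝ) < 1 - γ := by linarith
  have hεsum : (0:ℝ) ≤ ε + εB := by linarith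
  -- Lemma A: one-step contraction from the V-gap to the Q-gap
  have lemA : ∀ c' : ℝ, 0 ≤ c' → (∀ hh, |Vstar hh - v (f hh)| ≤ c') →
      ∀ s b, |QB s b - q s b| ≤ γ * c' := by
    intro c' hc' hbd s b
    -- rewrite q s b as a HasSum over H × A
    have key : ∀ (hh : H) (aa : A),
        (∑ p : S × R,
          ((∑ o ∈ Finset.univ.filter fun o => f (ext hh aa o p.2) = p.1,
            P hh aa o p.2) * B s b hh aa) * (ρ p.2 + γ * v p.1))
        = (∑ o : O, ∑ r : R,
            P hh aa o r * (ρ r + γ * v (f (ext hh aa o r)))) * B s b hh aa := by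
      intro hh aa
      have keyA : (∑ s' : S, ∑ r : R,
          (∑ o ∈ Finset.univ.filter fun o => f (ext hh aa o r) = s',
            P hh aa o r) * (ρ r + γ * v s'))
          = ∑ o : O, ∑ r : R, P hh aa o r * (ρ r + γ * v (f (ext hh aa o r))) := by
        rw [Finset.sum_comm]
        conv_rhs => rw [Finset.sum_comm]
        refine Finset.sum_congr rfl fun r _ => ?_
        simp only [Finset.sum_filter, Finset.sum_mul, ite_mul, zero_mul]
        rw [Finset.sum_comm]
        refine Finset.sum_congr rfl fun o _ => ?_
        simp
      rw [Fintype.sum_prod_type]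
      have e1 : ∀ (s' : S) (r : R),
          (∑ o ∈ Finset.univ.filter fun o => f (ext hh aa o r) = s',
            P hh aa o r) * B s b hh aa * (ρ r + γ * v s')
          = ((∑ o ∈ Finset.univ.filter fun o => f (ext hh aa o r) = s',
            P hh aa o r) * (ρ r + γ * v s')) * B s b hh aa := fun _ _ => by ring
      simp only [e1]
      simp only [← Finset.sum_mul]
      rw [keyA]
    have hq' : HasSum (fun x : H × A =>
        (∑ o : O, ∑ r : R,
          P x.1 x.2 o r * (ρ r + γ * v (f (ext x.1 x.2 o r)))) * B s b x.1 x.2)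
        (q s b) := by
      have h1 : HasSum (fun x : H × A => ∑ p : S × R,
          ((∑ o ∈ Finset.univ.filter fun o => f (ext x.1 x.2 o p.2) = p.1,
            P x.1 x.2 o p.2) * B s b x.1 x.2) * (ρ p.2 + γ * v p.1))
          (∑ p : S × R, pB s b p.1 p.2 * (ρ p.2 + γ * v p.1)) :=
        hasSum_sum fun p _ => (hpB s b p.1 p.2).mul_right _
      have h2 : q s b = ∑ p : S × R, pB s b p.1 p.2 * (ρ p.2 + γ * v p.1) := by
        rw [hq, Fintype.sum_prod_type]
      rw [h2]
      have e : (fun x : H × A => ∑ p : S × R,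
          ((∑ o ∈ Finset.univ.filter fun o => f (ext x.1 x.2 o p.2) = p.1,
            P x.1 x.2 o p.2) * B s b x.1 x.2) * (ρ p.2 + γ * v p.1))
          = fun x : H × A =>
            (∑ o : O, ∑ r : R,
              P x.1 x.2 o r * (ρ r + γ * v (f (ext x.1 x.2 o r)))) * B s b x.1 x.2 :=
        funext fun x => key x.1 x.2
      rw [e] at h1
      exact h1
    have hQ' : HasSum (fun x : H × A =>
        (∑ o : O, ∑ r : R,
          P x.1 x.2 o r * (ρ r + γ * Vstar (ext x.1 x.2 o r))) * B s b x.1 x.2)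
        (QB s b) := by
      simpa only [← hQstar] using hQB s b
    have hdiff := hQ'.sub hq'
    have hterm : ∀ x : H × A,
        |(∑ o : O, ∑ r : R,
            P x.1 x.2 o r * (ρ r + γ * Vstar (ext x.1 x.2 o r))) * B s b x.1 x.2
          - (∑ o : O, ∑ r : R,
            P x.1 x.2 o r * (ρ r + γ * v (f (ext x.1 x.2 o r)))) * B s b x.1 x.2|
          ≤ γ * c' * B s b x.1 x.2 := by
      intro x
      rw [← sub_mul, abs_mul, abs_of_nonneg (hB0 s b x.1 x.2)]
      have e2 : (∑ o : O, ∑ r : R,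
            P x.1 x.2 o r * (ρ r + γ * Vstar (ext x.1 x.2 o r)))
          - (∑ o : O, ∑ r : R,
            P x.1 x.2 o r * (ρ r + γ * v (f (ext x.1 x.2 o r))))
          = ∑ o : O, ∑ r : R,
            P x.1 x.2 o r * (γ * (Vstar (ext x.1 x.2 o r) - v (f (ext x.1 x.2 o r)))) := by
        rw [← Finset.sum_sub_distrib]
        refine Finset.sum_congr rfl fun o _ => ?_
        rw [← Finset.sum_sub_distrib]
        refine Finset.sum_congr rfl fun r _ => ?_
        ring
      rw [e2]
      have hb1 : |∑ o : O, ∑ r : R,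
          P x.1 x.2 o r * (γ * (Vstar (ext x.1 x.2 o r) - v (f (ext x.1 x.2 o r))))|
          ≤ γ * c' := by
        calc |∑ o : O, ∑ r : R,
            P x.1 x.2 o r * (γ * (Vstar (ext x.1 x.2 o r) - v (f (ext x.1 x.2 o r))))|
            ≤ ∑ o : O, ∑ r : R,
              |P x.1 x.2 o r * (γ * (Vstar (ext x.1 x.2 o r) - v (f (ext x.1 x.2 o r))))| :=
            (Finset.abs_sum_le_sum_abs _ _).trans
              (Finset.sum_le_sum fun o _ => Finset.abs_sum_le_sum_abs _ _)
          _ ≤ ∑ o : O, ∑ r : R, P x.1 x.2 o r * (γ * c') := by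
            refine Finset.sum_le_sum fun o _ => Finset.sum_le_sum fun r _ => ?_
            rw [abs_mul, abs_of_nonneg (hP0 x.1 x.2 o r), abs_mul, abs_of_nonneg hγ0]
            refine mul_le_mul_of_nonneg_left ?_ (hP0 x.1 x.2 o r)
            exact mul_le_mul_of_nonneg_left (hbd _) hγ0
          _ = γ * c' := by
            simp only [← Finset.sum_mul]
            rw [hP1, one_mul]
      exact mul_le_mul_of_nonneg_right hb1 (hB0 s b x.1 x.2)
    have hg : HasSum (fun x : H × A => γ * c' * B s b x.1 x.2) (γ * c') := by
      simpa using (hB1 s b).mul_left (γ * c')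
    rw [abs_le]
    constructor
    · exact hasSum_le (fun x => by linarith [(abs_le.mp (hterm x)).1]) hg.neg hdiff
    · exact hasSum_le (fun x => (abs_le.mp (hterm x)).2) hdiff hg
  -- Lemma B: from the Q-gap to the V-gap
  have lemB : ∀ d : ℝ, (∀ s b, |QB s b - q s b| ≤ d) →
      ∀ h₀, |Vstar h₀ - v (f h₀)| ≤ ε + εB + d := by
    intro d hd h₀
    set s := f h₀ with hs
    have hfib : HasSum (fun hh : H => ∑ a : A, Qstar hh a * B s (πs s) hh a)
        (QB s (πs s)) :=
      (hQB s (πs s)).prod_fiberwise fun hh => hasSum_fintype _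
    have hconst : HasSum (fun hh : H => BH s hh * Vstar h₀) (Vstar h₀) := by
      simpa using (hBH1 s).mul_right (Vstar h₀)
    have hdiff := hfib.sub hconst
    have hbnd : HasSum (fun hh : H => BH s hh * (ε + εB)) (ε + εB) := by
      simpa using (hBH1 s).mul_right (ε + εB)
    have hpt : ∀ hh : H,
        |(∑ a : A, Qstar hh a * B s (πs s) hh a) - BH s hh * Vstar h₀|
          ≤ BH s hh * (ε + εB) := by
      intro hh
      by_cases hz : BH s hh = 0
      · simp [hBdec, hz]
      · have hfh : f hh = s := hBHsupp s hh hz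
        have e : (∑ a : A, Qstar hh a * B s (πs s) hh a)
            = BH s hh * ∑ a : A, Qstar hh a * Bπ s hh a := by
          rw [Finset.mul_sum]
          exact Finset.sum_congr rfl fun a _ => by rw [hBdec]; ring
        rw [e, ← mul_sub, abs_mul, abs_of_nonneg (hBH0 s hh)]
        refine mul_le_mul_of_nonneg_left ?_ (hBH0 s hh)
        have h1 := hBcond hh
        rw [hfh] at h1
        have h2 := hVunif hh h₀ (by rw [hfh])
        calc |(∑ a : A, Qstar hh a * Bπ s hh a) - Vstar h₀|
            ≤ |(∑ a : A, Qstar hh a * Bπ s hh a) - Vstar hh| + |Vstar hh - Vstar h₀| :=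
            abs_sub_le _ _ _
          _ ≤ εB + ε := add_le_add h1 h2
          _ = ε + εB := by ring
    have hQV : |QB s (πs s) - Vstar h₀| ≤ ε + εB := by
      rw [abs_le]
      constructor
      · exact hasSum_le (fun hh => by linarith [(abs_le.mp (hpt hh)).1]) hbnd.neg hdiff
      · exact hasSum_le (fun hh => (abs_le.mp (hpt hh)).2) hdiff hbnd
    have hqv : q s (πs s) = v s := hπs s
    have h3 := hd s (πs s)
    have h4 : |Vstar h₀ - v s| ≤ |Vstar h₀ - QB s (πs s)| + |QB s (πs s) - v s| :=
      abs_sub_le _ _ _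
    have h5 : |Vstar h₀ - QB s (πs s)| = |QB s (πs s) - Vstar h₀| := abs_sub_comm _ _
    have h6 : |QB s (πs s) - v s| = |QB s (πs s) - q s (πs s)| := by rw [hqv]
    linarith
  -- main induction
  have main : ∀ n : ℕ, ∀ hh : H,
      |Vstar hh - v (f hh)| ≤ (ε + εB) / (1 - γ) + γ ^ n / (1 - γ) := by
    intro n
    induction n with
    | zero =>
      intro hh
      have hV := hVstarBnd hh
      have hvb := hvBnd (f hh)
      have hnn : 0 ≤ (ε + εB) / (1 - γ) := div_nonneg hεsum h1γ.le
      rw [pow_zero, abs_le]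
      constructor <;> linarith
    | succ n ih =>
      intro hh
      have hcn : 0 ≤ (ε + εB) / (1 - γ) + γ ^ n / (1 - γ) :=
        add_nonneg (div_nonneg hεsum h1γ.le) (div_nonneg (pow_nonneg hγ0 n) h1γ.le)
      have hA := lemA _ hcn ih
      have hB' := lemB _ hA hh
      have ealg : ε + εB + γ * ((ε + εB) / (1 - γ) + γ ^ n / (1 - γ))
          = (ε + εB) / (1 - γ) + γ ^ (n + 1) / (1 - γ) := by
        field_simp
        ring
      linarith [hB', ealg.le, ealg.ge]
  have hVv : ∀ hh : H, |Vstar hh - v (f hh)| ≤ (ε + εB) / (1 - γ) := by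
    intro hh
    have h0 : Filter.Tendsto (fun n : ℕ => γ ^ n) Filter.atTop (nhds 0) :=
      tendsto_pow_atTop_nhds_zero_of_lt_one hγ0 hγ1
    have hlim : Filter.Tendsto (fun n : ℕ => (ε + εB) / (1 - γ) + γ ^ n / (1 - γ))
        Filter.atTop (nhds ((ε + εB) / (1 - γ))) := by
      have := (h0.div_const (1 - γ)).const_add ((ε + εB) / (1 - γ))
      simpa using this
    exact ge_of_tendsto hlim (Filter.Eventually.of_forall fun n => main n hh)
  intro h a
  have hc : 0 ≤ (ε + εB) / (1 - γ) := div_nonneg hεsum h1γ.le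
  have hQ := lemA _ hc hVv (f h) (g h a)
  have hV := hVv h
  constructor
  · refine hQ.trans ?_
    rw [mul_div_assoc', div_le_div_iff₀ h1γ (by positivity)]
    nlinarith [mul_nonneg (mul_nonneg hγ0 hεsum) h1γ.le,
      mul_nonneg (mul_nonneg (mul_nonneg hγ0 hεsum) h1γ.le) hγ0]
  · refine hV.trans ?_
    rw [div_le_div_iff₀ h1γ (by positivity)]
    nlinarith [mul_nonneg hεsum h1γ.le, mul_nonneg (mul_nonneg hεsum h1γ.le) hγ0]
end

section
/- In a finite MDP with transition kernel p, rewards in [0,1], and discount γ ∈ [0,1): if a stationary policy π and the optimal value functions satisfy v^π(s) ≤ max_b q^π(s,b) ≤ v^π(s) + c for all states s (with c ≥ 0), then max_s (v*(s) − v^π(s)) ≤ c/(1−γ). -/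
/-!
The gap `M = max_s (v*(s) − v^π(s))` satisfies `M ≤ γ M + c`: one Bellman backup turns a
uniform bound `M` on `v* − v^π` into the bound `γ M` on `q* − q^π`, and taking the maximum
over actions then costs at most the greediness defect `c`. Since `γ < 1`, this gives
`M ≤ c / (1 − γ)`.
-/

open Finset

lemma bellman_backup_sub_le {S R : Type*} [Fintype S] [Fintype R]
    (γ : ℝ) (hγ0 : 0 ≤ γ) (ρ : R → ℝ) (p : S → R → ℝ)
    (hp0 : ∀ s r, 0 ≤ p s r) (hp1 : ∑ s : S, ∑ r : R, p s r = 1)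
    (v w : S → ℝ) (M : ℝ) (hvw : ∀ s, v s - w s ≤ M) :
    ∑ s : S, ∑ r : R, p s r * (ρ r + γ * v s)
      - ∑ s : S, ∑ r : R, p s r * (ρ r + γ * w s) ≤ γ * M :=
  calc ∑ s : S, ∑ r : R, p s r * (ρ r + γ * v s)
        - ∑ s : S, ∑ r : R, p s r * (ρ r + γ * w s)
      = ∑ s : S, ∑ r : R, p s r * (γ * (v s - w s)) := by
        simp only [← sum_sub_distrib]
        exact sum_congr rfl fun s _ => sum_congr rfl fun r _ => by ring
    _ ≤ ∑ s : S, ∑ r : R, p s r * (γ * M) := by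
        gcongr with s _ r _
        · exact hp0 s r
        · exact hvw s
    _ = γ * M := by simp only [← sum_mul, hp1, one_mul]

theorem stmt_16_general
    {S Bt R : Type*} [Fintype S] [Nonempty S] [Fintype Bt] [Nonempty Bt]
    [Fintype R]
    (γ : ℝ) (hγ0 : 0 ≤ γ) (hγ1 : γ < 1)
    (ρ : R → ℝ)
    -- the finite MDP transition kernel p(s' r | s b)
    (p : S → Bt → S → R → ℝ)
    (hp0 : ∀ s b s' r, 0 ≤ p s b s' r)
    (hp1 : ∀ s b, ∑ s' : S, ∑ r : R, p s b s' r = 1)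
    -- a stationary deterministic policy π and its value functions
    (qπ : S → Bt → ℝ) (vπ : S → ℝ)
    (hqπ : ∀ s b, qπ s b = ∑ s' : S, ∑ r : R, p s b s' r * (ρ r + γ * vπ s'))
    -- the optimal value functions
    (qstar : S → Bt → ℝ) (vstar : S → ℝ)
    (hqstar : ∀ s b,
      qstar s b = ∑ s' : S, ∑ r : R, p s b s' r * (ρ r + γ * vstar s'))
    (hvstar : ∀ s, vstar s = Finset.univ.sup' Finset.univ_nonempty (qstar s))
    -- the near-greediness assumption on π
    (c : ℝ)
    (hnear : ∀ s,
      vπ s ≤ Finset.univ.sup' Finset.univ_nonempty (qπ s) ∧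
      Finset.univ.sup' Finset.univ_nonempty (qπ s) ≤ vπ s + c) :
    Finset.univ.sup' Finset.univ_nonempty (fun s => vstar s - vπ s)
      ≤ c / (1 - γ) := by
  set M := univ.sup' univ_nonempty (fun s => vstar s - vπ s)
  have hM : ∀ s, vstar s - vπ s ≤ M := fun s => le_sup' (fun s => vstar s - vπ s) (mem_univ s)
  have hq : ∀ s b, qstar s b ≤ qπ s b + γ * M := fun s b => by
    have := bellman_backup_sub_le γ hγ0 ρ (p s b) (hp0 s b) (hp1 s b) vstar vπ M hM
    rw [hqstar, hqπ]
    linarith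
  have hv : ∀ s, vstar s ≤ univ.sup' univ_nonempty (qπ s) + γ * M := fun s => by
    rw [hvstar, sup'_add]
    exact sup'_mono_fun fun b _ => hq s b
  have hfix : M ≤ γ * M + c :=
    sup'_le _ _ fun s _ => by linarith [hv s, (hnear s).2]
  rw [le_div_iff₀ (sub_pos.2 hγ1)]
  linarith

/-- In a finite MDP with rewards in [0,1] and discount
`γ ∈ [0,1)`: if a stationary deterministic policy `π` satisfies
`v^π(s) ≤ max_b q^π(s,b) ≤ v^π(s) + c` for all states `s` (with `c ≥ 0`), then
`max_s (v*(s) − v^π(s)) ≤ c/(1−γ)`. -/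
theorem stmt_16
    {S Bt R : Type*} [Fintype S] [Nonempty S] [Fintype Bt] [Nonempty Bt]
    [Fintype R]
    (γ : ℝ) (hγ0 : 0 ≤ γ) (hγ1 : γ < 1)
    (ρ : R → ℝ) (hρ : ∀ r, ρ r ∈ Set.Icc (0 : ℝ) 1)
    -- the finite MDP transition kernel p(s' r | s b)
    (p : S → Bt → S → R → ℝ)
    (hp0 : ∀ s b s' r, 0 ≤ p s b s' r)
    (hp1 : ∀ s b, ∑ s' : S, ∑ r : R, p s b s' r = 1)
    -- a stationary deterministic policy π and its value functions
    (π : S → Bt) (qπ : S → Bt → ℝ) (vπ : S → ℝ)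
    (hqπ : ∀ s b, qπ s b = ∑ s' : S, ∑ r : R, p s b s' r * (ρ r + γ * vπ s'))
    (hvπ : ∀ s, vπ s = qπ s (π s))
    -- the optimal value functions
    (qstar : S → Bt → ℝ) (vstar : S → ℝ)
    (hqstar : ∀ s b,
      qstar s b = ∑ s' : S, ∑ r : R, p s b s' r * (ρ r + γ * vstar s'))
    (hvstar : ∀ s, vstar s = Finset.univ.sup' Finset.univ_nonempty (qstar s))
    -- the near-greediness assumption on π
    (c : ℝ) (hc : 0 ≤ c)
    (hnear : ∀ s,
      vπ s ≤ Finset.univ.sup' Finset.univ_nonempty (qπ s) ∧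
      Finset.univ.sup' Finset.univ_nonempty (qπ s) ≤ vπ s + c) :
    Finset.univ.sup' Finset.univ_nonempty (fun s => vstar s - vπ s)
      ≤ c / (1 - γ) :=
  stmt_16_general γ hγ0 hγ1 ρ p hp0 hp1 qπ vπ hqπ qstar vstar hqstar hvstar c hnear
end
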